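/- arXiv:2409.19067 — 8 statements merged into one kernel-verified Lean document; each statement's English description precedes it below -/
import Mathlib

section
/- Every pendant vertex (vertex of degree 1) of a connected graph G with at least two vertices belongs to every monitoring edge-geodetic set of G. -/
open SimpleGraph

def Monitors {V : Type*} (G : SimpleGraph V) (u v : V) (e : Sym2 V) : Prop :=
  ∀ p : G.Walk u v, p.length = G.dist u v → e ∈ p.edges

def MEGSet {V : Type*} (G : SimpleGraph V) (M : Set V) : Prop :=
  ∀ e ∈ G.edgeSet, ∃ u ∈ M, ∃ v ∈ M, Monitors G u v e

/-- Any walk from `w ≠ v` to a pendant vertex `v` with unique neighbor `u`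
has length at least `dist w u + 1`. -/
lemma pendant_dist {V : Type*} (G : SimpleGraph V) (v u : V)
    (huniq : ∀ x, G.Adj v x → x = u) (w : V) (hw : w ≠ v)
    (p : G.Walk w v) : G.dist w u + 1 ≤ p.length := by
  obtain ⟨x, hadj, q, hq⟩ := SimpleGraph.Walk.exists_eq_cons_of_ne (Ne.symm hw) p.reverse
  have hx : x = u := huniq x hadj
  have hlen : p.reverse.length = q.length + 1 := by
    rw [hq]; simp
  have hlen' : p.reverse.length = p.length := SimpleGraph.Walk.length_reverse p
  have hdq : G.dist x w ≤ q.length := SimpleGraph.dist_le q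
  have hcomm : G.dist w u = G.dist u w := SimpleGraph.dist_comm
  rw [← hx] at hcomm ⊢
  omega

/-- Every pendant vertex of a connected graph with at least two vertices
belongs to every MEG-set. -/
theorem stmt1 {V : Type*} [Fintype V] (G : SimpleGraph V) [DecidableRel G.Adj]
    (hG : G.Connected) (hcard : 2 ≤ Fintype.card V)
    (v : V) (hv : G.degree v = 1)
    (M : Set V) (hM : MEGSet G M) : v ∈ M := by
  -- unique neighbor u
  classical
  have hv' : (G.neighborFinset v).card = 1 := hv
  obtain ⟨u, hu⟩ := Finset.card_eq_one.mp hv'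
  have huadj : G.Adj v u := by
    have : u ∈ G.neighborFinset v := by rw [hu]; exact Finset.mem_singleton_self u
    simpa [SimpleGraph.mem_neighborFinset] using this
  have huniq : ∀ x, G.Adj v x → x = u := by
    intro x hx
    have : x ∈ G.neighborFinset v := by simpa [SimpleGraph.mem_neighborFinset] using hx
    rw [hu] at this
    simpa using this
  have he : s(v, u) ∈ G.edgeSet := huadj
  obtain ⟨a, ha, b, hb, hmon⟩ := hM _ he
  by_cases hav : a = v
  · exact hav ▸ ha
  by_cases hbv : b = v
  · exact hbv ▸ hb
  exfalso
  obtain ⟨p, hp⟩ := hG.exists_walk_length_eq_dist a b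
  have hep : s(v, u) ∈ p.edges := hmon p hp
  have hvs : v ∈ p.support := p.fst_mem_support_of_mem_edges hep
  -- split the walk at v
  set q := p.takeUntil v hvs with hqdef
  set r := p.dropUntil v hvs with hrdef
  have hsplit : q.length + r.length = p.length := by
    have := p.take_spec hvs
    calc q.length + r.length = (q.append r).length := (SimpleGraph.Walk.length_append q r).symm
      _ = p.length := by rw [this]
  have h1 : G.dist a u + 1 ≤ q.length := pendant_dist G v u huniq a hav q
  have h2 : G.dist b u + 1 ≤ r.reverse.length :=
    pendant_dist G v u huniq b hbv r.reverse
  have h2' : r.reverse.length = r.length := SimpleGraph.Walk.length_reverse r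
  have htri : G.dist a b ≤ G.dist a u + G.dist u b := hG.dist_triangle
  have hub : G.dist u b = G.dist b u := SimpleGraph.dist_comm
  omega
end

section
/- Let G be a connected graph and v a vertex such that there exists u ∈ N(v) with the property that every induced path u-v-x with x ∈ N(v) lies on a 4-cycle. Then v belongs to every monitoring edge-geodetic set of G. -/
open SimpleGraph

/-- `u` is a support of `v`: `u ∈ N(v)` and every induced 2-path `u-v-x`
with `x ∈ N(v)` lies on a 4-cycle. -/
def Support {V : Type*} (G : SimpleGraph V) (v u : V) : Prop :=
  G.Adj v u ∧ ∀ x, G.Adj v x → x ≠ u → ¬ G.Adj u x →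
    ∃ w, w ≠ v ∧ G.Adj u w ∧ G.Adj w x

lemma dart_snd_mem_support_tail {V : Type*} {G : SimpleGraph V} {a b : V}
    (p : G.Walk a b) {d : G.Dart} (hd : d ∈ p.darts) : d.snd ∈ p.support.tail := by
  induction p with
  | nil => simp at hd
  | cons h q ih =>
    rw [Walk.darts_cons] at hd
    rw [Walk.support_cons]
    rcases List.mem_cons.mp hd with h1 | h2
    · subst h1; exact q.start_mem_support
    · exact List.mem_of_mem_tail (ih h2)

lemma surgery {V : Type*} (G : SimpleGraph V) (hG : G.Connected) (v u : V)
    (hsup : Support G v u) :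
    ∀ {a b : V} (p : G.Walk a b), p.IsPath → p.length = G.dist a b → v ≠ b →
      (∃ d ∈ p.darts, d.toProd = (u, v)) →
      ∃ q : G.Walk a b, q.length = p.length ∧ s(u, v) ∉ q.edges := by
  intro a b p
  induction p with
  | nil => rintro _ _ _ ⟨d, hd, _⟩; simp at hd
  | @cons a c b h p' ih =>
    rintro hpath hlen hvb ⟨d, hd, hduv⟩
    rw [Walk.darts_cons] at hd
    rw [Walk.cons_isPath_iff] at hpath
    obtain ⟨hpath', hans⟩ := hpath
    rcases List.mem_cons.mp hd with hfront | hrest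
    · -- the dart (u,v) is the first dart: a = u, c = v
      have hau : a = u := by have := congrArg Prod.fst (hfront ▸ hduv); simpa using this
      have hcv : c = v := by have := congrArg Prod.snd (hfront ▸ hduv); simpa using this
      subst hau; subst hcv
      -- p' : Walk v b, v ≠ b so p' = cons h' r
      cases p' with
      | nil => exact absurd rfl hvb
      | @cons _ x _ h' r =>
        rw [Walk.cons_isPath_iff] at hpath'
        obtain ⟨hrpath, hvns⟩ := hpath'
        have hlen' : r.length + 2 = G.dist a b := by
          simpa [Nat.add_assoc] using hlen
        by_cases hxu : x = a
        · subst hxu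
          have := G.dist_le r
          omega
        · by_cases hadj : G.Adj a x
          · have := G.dist_le (Walk.cons hadj r)
            rw [Walk.length_cons] at this
            omega
          · obtain ⟨w, hwv, huw, hwx⟩ := hsup.2 x h' hxu hadj
            refine ⟨Walk.cons huw (Walk.cons hwx r), by simp, ?_⟩
            intro hmem
            simp only [Walk.edges_cons, List.mem_cons] at hmem
            have hne : a ≠ c := h.ne
            rcases hmem with h1 | h2 | h3
            · rcases Sym2.eq_iff.mp h1 with ⟨_, hw⟩ | ⟨_, hca⟩
              · exact hwv hw.symm
              · exact hne hca.symm
            · rcases Sym2.eq_iff.mp h2 with ⟨_, hx⟩ | ⟨_, hw⟩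
              · exact h'.ne hx
              · exact hwv hw.symm
            · exact hvns (r.snd_mem_support_of_mem_edges h3)
    · -- the dart is in p'
      have hcb : p'.length = G.dist c b := by
        have h1 := G.dist_le p'
        have h2 : G.dist a b ≤ G.dist a c + G.dist c b := hG.dist_triangle
        have h3 : G.dist a c ≤ 1 := by
          have := G.dist_le (Walk.cons h Walk.nil)
          simpa using this
        rw [Walk.length_cons] at hlen
        omega
      have hdfst : d.fst = u := by have := congrArg Prod.fst hduv; simpa using this
      have hdsnd : d.snd = v := by have := congrArg Prod.snd hduv; simpa using this
      have hvc : v ≠ c := by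
        intro hvc
        have h1 := dart_snd_mem_support_tail p' hrest
        rw [hdsnd] at h1
        have h2 := hpath'.support_nodup
        rw [p'.support_eq_cons] at h2
        exact (List.nodup_cons.mp h2).1 (hvc ▸ h1)
      obtain ⟨q', hq'len, hq'e⟩ := ih hpath' hcb hvb ⟨d, hrest, hduv⟩
      refine ⟨Walk.cons h q', by simp [hq'len], ?_⟩
      intro hmem
      simp only [Walk.edges_cons, List.mem_cons] at hmem
      rcases hmem with h1 | h2
      · rcases Sym2.eq_iff.mp h1 with ⟨_, hcv⟩ | ⟨_, hva'⟩
        · exact hvc hcv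
        · -- a = v, but then v = d.snd ∈ p'.support contradicts a ∉ p'.support
          have h4 := p'.dart_snd_mem_support_of_mem_darts hrest
          rw [hdsnd] at h4
          exact hans (by rwa [hva'] at h4)
      · exact hq'e h2

/-- If `v` has a support, then `v` belongs to every MEG-set. -/
theorem stmt3 {V : Type*} [Fintype V] (G : SimpleGraph V) (hG : G.Connected)
    (v u : V) (hsup : Support G v u)
    (M : Set V) (hM : MEGSet G M) : v ∈ M := by
  have he : s(u, v) ∈ G.edgeSet := G.mem_edgeSet.mpr hsup.1.symm
  obtain ⟨a, haM, b, hbM, hmon⟩ := hM _ he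
  by_contra hv
  have hva : v ≠ a := fun h => hv (h ▸ haM)
  have hvb : v ≠ b := fun h => hv (h ▸ hbM)
  obtain ⟨p, hpath, hlen⟩ := hG.exists_path_of_dist a b
  have hep := hmon p hlen
  rw [Walk.edges] at hep
  obtain ⟨d, hd, hde⟩ := List.mem_map.mp hep
  have hde' : s(d.fst, d.snd) = s(u, v) := hde
  rcases Sym2.eq_iff.mp hde' with ⟨h1, h2⟩ | ⟨h1, h2⟩
  · obtain ⟨q, hqlen, hqe⟩ := surgery G hG v u hsup p hpath hlen hvb
      ⟨d, hd, Prod.ext h1 h2⟩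
    exact hqe (hmon q (hqlen.trans hlen))
  · -- dart traversed as (v, u); use the reverse walk
    have hrlen : p.reverse.length = G.dist b a := by
      rw [Walk.length_reverse, hlen, G.dist_comm]
    have hdr : d.symm ∈ p.reverse.darts := by
      rw [Walk.darts_reverse, List.mem_reverse, List.mem_map]
      exact ⟨d, hd, rfl⟩
    have hsymm : d.symm.toProd = (u, v) := by
      simp [Dart.symm, Prod.swap, h1, h2]
    obtain ⟨q, hqlen, hqe⟩ := surgery G hG v u hsup p.reverse hpath.reverse hrlen hva
      ⟨d.symm, hdr, hsymm⟩
    have hql : q.reverse.length = G.dist a b := by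
      rw [Walk.length_reverse, hqlen, Walk.length_reverse, hlen]
    have := hmon q.reverse hql
    rw [Walk.edges_reverse, List.mem_reverse] at this
    exact hqe this
end

section
/- In a connected interval graph G, the set M of all mandatory vertices forms a monitoring edge-geodetic set of G, and hence is the unique minimum MEG-set of G. -/
open SimpleGraph

def Mandatory {V : Type*} (G : SimpleGraph V) (v : V) : Prop :=
  ∃ u, Support G v u

set_option linter.unusedSectionVars false

namespace MEG7

variable {V : Type*} {G : SimpleGraph V} {l r : V → ℝ}

/-- Chain conditions. -/
structure IChain (G : SimpleGraph V) (l r : V → ℝ) (c : ℕ → V) (N : ℕ) : Prop where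
  adj : ∀ k, k + 1 ≤ N → G.Adj (c k) (c (k + 1))
  gap : ∀ k, k + 2 ≤ N → r (c k) < l (c (k + 2))
  uniq : ∀ k, k + 2 ≤ N → ∀ w, G.Adj w (c k) → G.Adj w (c (k + 2)) → w = c (k + 1)

lemma adj_lr (hrep : ∀ a b, G.Adj a b ↔ a ≠ b ∧ l a ≤ r b ∧ l b ≤ r a)
    {a b : V} (h : G.Adj a b) : l a ≤ r b := ((hrep a b).1 h).2.1

lemma adj_rl (hrep : ∀ a b, G.Adj a b ↔ a ≠ b ∧ l a ≤ r b ∧ l b ≤ r a)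
    {a b : V} (h : G.Adj a b) : l b ≤ r a := ((hrep a b).1 h).2.2

lemma adj_of_touch (hrep : ∀ a b, G.Adj a b ↔ a ≠ b ∧ l a ≤ r b ∧ l b ≤ r a)
    {a b : V} {t : ℝ} (hne : a ≠ b) (h1 : l a ≤ t) (h2 : t ≤ r a)
    (h3 : l b ≤ t) (h4 : t ≤ r b) : G.Adj a b :=
  (hrep a b).2 ⟨hne, le_trans h1 h4, le_trans h3 h2⟩

variable (hlr : ∀ a, l a ≤ r a)
  (hrep : ∀ a b, G.Adj a b ↔ a ≠ b ∧ l a ≤ r b ∧ l b ≤ r a)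
  {c : ℕ → V} {N : ℕ}

include hlr hrep in
lemma lmono (hc : IChain G l r c N) :
    ∀ i j, 1 ≤ i → i ≤ j → j ≤ N → l (c i) ≤ l (c j) := by
  intro i j hi hij hjN
  induction j with
  | zero => omega
  | succ j ih =>
    rcases Nat.lt_or_ge i (j+1) with h | h
    · have h1 : l (c i) ≤ l (c j) := ih (by omega) (by omega)
      obtain ⟨m, rfl⟩ : ∃ m, j = m + 1 := ⟨j - 1, by omega⟩
      have h2 : l (c (m+1)) ≤ r (c m) := adj_rl hrep (hc.adj m (by omega))
      have h3 : r (c m) < l (c (m+2)) := hc.gap m (by omega)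
      calc l (c i) ≤ l (c (m+1)) := h1
        _ ≤ r (c m) := h2
        _ ≤ l (c (m+2)) := le_of_lt h3
    · have : i = j + 1 := by omega
      subst this; rfl

include hlr hrep in
lemma rmono (hc : IChain G l r c N) :
    ∀ i j, i ≤ j → j + 1 ≤ N → r (c i) ≤ r (c j) := by
  intro i j hij hjN
  induction j with
  | zero => have h0 : i = 0 := by omega
            subst h0; rfl
  | succ j ih =>
    rcases Nat.lt_or_ge i (j+1) with h | h
    · have h1 : r (c i) ≤ r (c j) := ih (by omega) (by omega)
      have h2 : r (c j) < l (c (j+2)) := hc.gap j (by omega)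
      have h3 : l (c (j+2)) ≤ r (c (j+1)) := adj_rl hrep (hc.adj (j+1) (by omega))
      calc r (c i) ≤ r (c j) := h1
        _ ≤ l (c (j+2)) := le_of_lt h2
        _ ≤ r (c (j+1)) := h3
    · have : i = j + 1 := by omega
      subst this; rfl

include hlr hrep in
lemma cross2 (hc : IChain G l r c N) {m : ℕ} (hm : m + 2 ≤ N) {w w' : V}
    (hadj : G.Adj w w') (h1 : r w < l (c (m+1))) (h2 : l (c (m+2)) ≤ r w') : False := by
  have hlw' : l w' ≤ r w := adj_rl hrep hadj
  -- w' is adjacent to c m via t := max (l (c m)) (l (c (m+1)))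
  have hA1 : G.Adj w' (c m) := by
    have hne : w' ≠ c m := by
      intro he
      have : r w' < l (c (m+2)) := by rw [he]; exact hc.gap m hm
      linarith
    refine adj_of_touch hrep (t := max (l (c m)) (l (c (m+1)))) hne ?_ ?_ ?_ ?_
    · exact le_trans hlw' (le_trans (le_of_lt h1) (le_max_right _ _))
    · have : max (l (c m)) (l (c (m+1))) ≤ r (c m) :=
        max_le (hlr _) (adj_rl hrep (hc.adj m (by omega)))
      have h4 : r (c m) < l (c (m+2)) := hc.gap m hm
      linarith
    · exact le_max_left _ _
    · exact max_le (hlr _) (adj_rl hrep (hc.adj m (by omega)))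
  -- w' is adjacent to c (m+2) via t := l (c (m+2))
  have hA2 : G.Adj w' (c (m+2)) := by
    have hl12 : l (c (m+1)) ≤ l (c (m+2)) := lmono hlr hrep hc (m+1) (m+2) (by omega) (by omega) hm
    have hne : w' ≠ c (m+2) := by
      intro he
      have : l w' = l (c (m+2)) := by rw [he]
      linarith
    exact adj_of_touch hrep (t := l (c (m+2))) hne (by linarith) h2 le_rfl (hlr _)
  have := hc.uniq m hm w' hA1 hA2
  subst this
  exact absurd (adj_rl hrep hadj) (by linarith)

include hlr hrep in
lemma lemA (hc : IChain G l r c N) :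
    ∀ {x z : V} (W : G.Walk x z), z = c N → ∀ (k : ℕ), 1 ≤ k → k ≤ N → r x < l (c k) →
      N + 2 ≤ W.length + k := by
  intro x z W
  induction W with
  | nil =>
    rintro rfl k h1 hN hrx
    exfalso
    have hll : l (c k) ≤ l (c N) := by
      rcases Nat.eq_or_lt_of_le hN with h | h
      · subst h; rfl
      · exact lmono hlr hrep hc k N h1 hN le_rfl
    have := hlr (c N)
    linarith
  | @cons a b z h W ih =>
    rintro rfl k h1 hN hrx
    rcases Nat.eq_or_lt_of_le hN with hkN | hkN
    · subst hkN
      have hW1 : 1 ≤ W.length := by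
        cases W with
        | nil =>
          exfalso
          have := adj_rl hrep h
          linarith
        | cons h' W' => simp [SimpleGraph.Walk.length_cons]
      simp only [SimpleGraph.Walk.length_cons]
      omega
    · by_cases hy : r b < l (c (k+1))
      · have := ih rfl (k+1) (by omega) (by omega) hy
        simp only [SimpleGraph.Walk.length_cons]
        omega
      · exfalso
        push_neg at hy
        obtain ⟨m, rfl⟩ : ∃ m, k = m + 1 := ⟨k - 1, by omega⟩
        exact cross2 hlr hrep hc (by omega) h hrx hy
include hlr hrep in
lemma lemU (hc : IChain G l r c N) :
    ∀ {x z : V} (W : G.Walk x z), z = c N → ∀ m, x = c m → m + 2 ≤ N →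
      W.length + m = N → ∀ i, m ≤ i → i + 1 ≤ N → s(c i, c (i+1)) ∈ W.edges := by
  intro x z W
  induction W with
  | nil =>
    rintro rfl m hx hm hlen
    exfalso
    simp only [SimpleGraph.Walk.length_nil] at hlen
    omega
  | @cons a b z h W ih =>
    rintro rfl m hx hm hlen i hmi hiN
    subst hx
    simp only [SimpleGraph.Walk.length_cons] at hlen
    rcases Nat.eq_or_lt_of_le hm with hm2 | hm3
    · -- m + 2 = N
      cases W with
      | nil => exfalso; simp at hlen; omega
      | @cons b' z' _ h2 W2 =>
        cases W2 with
        | cons h3 W3 =>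
          exfalso
          simp only [SimpleGraph.Walk.length_cons] at hlen
          omega
        | nil =>
          have h2' : G.Adj b (c (m+2)) := by rw [hm2]; exact h2
          have hb : b = c (m+1) := hc.uniq m (by omega) b h.symm h2'
          subst hb
          have hicase : i = m ∨ i = m + 1 := by omega
          simp only [SimpleGraph.Walk.edges_cons, List.mem_cons]
          rcases hicase with rfl | rfl
          · left; rfl
          · right; left; rw [hm2]
    · -- m + 3 ≤ N
      by_cases hy1 : r b < l (c (m+2))
      · exfalso
        have := lemA hlr hrep hc W rfl (m+2) (by omega) (by omega) hy1
        omega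
      · push_neg at hy1
        by_cases hy2 : l (c (m+3)) ≤ r b
        · exact absurd (cross2 hlr hrep hc (m := m+1) (by omega) h (hc.gap m (by omega)) hy2) id
        · push_neg at hy2
          have hne : b ≠ c (m+2) := by
            intro he
            have h' : G.Adj (c m) (c (m+2)) := he ▸ h
            have := adj_rl hrep h'
            have := hc.gap m (by omega)
            linarith
          have hlb : l b ≤ r (c (m+2)) := by
            have h1 := adj_rl hrep h
            have h2 := hc.gap m (by omega)
            have h3 := hlr (c (m+2))
            linarith
          have hb2 : G.Adj b (c (m+2)) :=
            adj_of_touch hrep (t := max (l b) (l (c (m+2)))) hne (le_max_left _ _)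
              (max_le (hlr b) hy1) (le_max_right _ _) (max_le hlb (hlr _))
          have hb : b = c (m+1) := hc.uniq m (by omega) b h.symm hb2
          subst hb
          simp only [SimpleGraph.Walk.edges_cons, List.mem_cons]
          rcases Nat.eq_or_lt_of_le hmi with rfl | hmi'
          · left; rfl
          · right
            exact ih rfl (m+1) rfl (by omega) (by omega) i (by omega) hiN

lemma chainWalk (hc : IChain G l r c N) :
    ∀ d m, m + d = N → ∃ W : G.Walk (c m) (c N), W.length = d := by
  intro d
  induction d with
  | zero =>
    intro m hm
    have : m = N := by omega
    subst this
    exact ⟨SimpleGraph.Walk.nil, rfl⟩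
  | succ d ih =>
    intro m hm
    obtain ⟨W, hW⟩ := ih (m+1) (by omega)
    exact ⟨SimpleGraph.Walk.cons (hc.adj m (by omega)) W, by simp [hW]⟩

lemma length_one_edges : ∀ {u v' : V} (p : G.Walk u v'), p.length = 1 → p.edges = [s(u, v')] := by
  intro u v' p
  cases p with
  | nil => intro hp; simp at hp
  | cons h q =>
    cases q with
    | nil => intro _; simp
    | cons h2 q2 => intro hp; simp [SimpleGraph.Walk.length_cons] at hp

include hlr hrep in
lemma monitors_of_chain (hc : IChain G l r c N) {i : ℕ} (hi : i + 1 ≤ N) :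
    Monitors G (c 0) (c N) s(c i, c (i+1)) := by
  intro p hp
  obtain ⟨W, hW⟩ := chainWalk hc N 0 (by omega)
  have hdle : G.dist (c 0) (c N) ≤ N :=
    le_trans (SimpleGraph.dist_le W) (le_of_eq hW)
  rcases Nat.lt_or_ge N 2 with hN2 | hN2
  · -- N = 1
    have hN1 : N = 1 := by omega
    subst hN1
    have hi0 : i = 0 := by omega
    subst hi0
    have hdist : G.dist (c 0) (c 1) = 1 :=
      SimpleGraph.dist_eq_one_iff_adj.mpr (hc.adj 0 le_rfl)
    rw [hdist] at hp
    rw [length_one_edges p hp]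
    simp
  · -- N ≥ 2
    have hlow : N + 2 ≤ p.length + 2 :=
      lemA hlr hrep hc p rfl 2 (by omega) hN2 (hc.gap 0 hN2)
    have hplen : p.length = N := by omega
    exact lemU hlr hrep hc p rfl 0 rfl hN2 (by omega) i (by omega) hi

def ChainOK (G : SimpleGraph V) (l r : V → ℝ) (c : ℕ → V) (N : ℕ) : Prop :=
  IChain G l r c N ∧ 1 ≤ N ∧ (N = 1 → r (c 0) ≤ r (c 1)) ∧
    ∀ i j, i ≤ N → j ≤ N → c i = c j → i = j

def HasEdge (c : ℕ → V) (N : ℕ) (u v : V) : Prop :=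
  ∃ j, j + 1 ≤ N ∧ ((c j = u ∧ c (j+1) = v) ∨ (c j = v ∧ c (j+1) = u))

lemma bad_of_not_mandatory {a p : V} (hadj : G.Adj a p) (h : ¬ Mandatory G a) :
    ∃ x, G.Adj a x ∧ x ≠ p ∧ ¬ G.Adj p x ∧ ∀ w, w ≠ a → ¬(G.Adj p w ∧ G.Adj w x) := by
  unfold Mandatory Support at h
  push_neg at h
  obtain ⟨x, hx1, hx2, hx3, hx4⟩ := h p hadj
  exact ⟨x, hx1, hx2, hx3, fun w hw hc => hx4 w hw hc.1 hc.2⟩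

include hrep in
lemma disj_of_not_adj {a b : V} (hne : a ≠ b) (hnadj : ¬ G.Adj a b) :
    r b < l a ∨ r a < l b := by
  by_contra hcon
  push_neg at hcon
  exact hnadj ((hrep a b).2 ⟨hne, hcon.1, hcon.2⟩)

include hlr hrep in
lemma stepLeft (hOK : ChainOK G l r c N) (x : V) (hxadj : G.Adj (c 0) x)
    (hxgap : r x < l (c 1))
    (hxuniq : ∀ w, w ≠ c 0 → ¬(G.Adj (c 1) w ∧ G.Adj w x)) :
    ChainOK G l r (fun n => match n with | 0 => x | Nat.succ m => c m) (N+1) ∧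
      ∀ u v, HasEdge c N u v →
        HasEdge (fun n => match n with | 0 => x | Nat.succ m => c m) (N+1) u v := by
  obtain ⟨hch, hN1, _, hinj⟩ := hOK
  refine ⟨⟨⟨?_, ?_, ?_⟩, by omega, by omega, ?_⟩, ?_⟩
  · intro k hk
    cases k with
    | zero => exact hxadj.symm
    | succ m => exact hch.adj m (by omega)
  · intro k hk
    cases k with
    | zero => exact hxgap
    | succ m => exact hch.gap m (by omega)
  · intro k hk w h1 h2
    cases k with
    | zero =>
      by_contra hw
      exact hxuniq w hw ⟨h2.symm, h1⟩
    | succ m => exact hch.uniq m (by omega) w h1 h2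
  · intro i j hi hj hij
    have key : ∀ m, m ≤ N → x ≠ c m := by
      intro m hm he
      cases m with
      | zero => exact hxadj.ne' he
      | succ m' =>
        have h1 : l (c 1) ≤ l (c (m'+1)) := lmono hlr hrep hch 1 (m'+1) le_rfl (by omega) hm
        have h2 : l x ≤ r x := hlr x
        rw [he] at h2
        rw [he] at hxgap
        linarith [hlr (c (m'+1))]
    cases i with
    | zero =>
      cases j with
      | zero => rfl
      | succ mj => exact absurd hij (key mj (by omega))
    | succ mi =>
      cases j with
      | zero => exact absurd hij.symm (key mi (by omega))
      | succ mj => have := hinj mi mj (by omega) (by omega) hij; omega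
  · rintro u v ⟨j, hj, hor⟩
    exact ⟨j+1, by omega, hor⟩

include hlr hrep in
lemma stepRight (hOK : ChainOK G l r c N) (x : V) (hxadj : G.Adj (c N) x)
    (hxgap : r (c (N-1)) < l x)
    (hxuniq : ∀ w, w ≠ c N → ¬(G.Adj (c (N-1)) w ∧ G.Adj w x)) :
    ChainOK G l r (Function.update c (N+1) x) (N+1) ∧
      ∀ u v, HasEdge c N u v → HasEdge (Function.update c (N+1) x) (N+1) u v := by
  obtain ⟨hch, hN1, _, hinj⟩ := hOK
  obtain ⟨M, rfl⟩ : ∃ M, N = M + 1 := ⟨N - 1, by omega⟩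
  simp only [Nat.add_sub_cancel] at hxgap hxuniq
  have hle : ∀ n, n ≤ M + 1 → Function.update c (M+1+1) x n = c n := by
    intro n hn
    exact Function.update_of_ne (by omega) _ _
  have htop : Function.update c (M+1+1) x (M+2) = x := Function.update_self _ _ _
  refine ⟨⟨⟨?_, ?_, ?_⟩, by omega, by omega, ?_⟩, ?_⟩
  · intro k hk
    rcases Nat.lt_or_ge (k+1) (M+2) with h | h
    · rw [hle k (by omega), hle (k+1) (by omega)]
      exact hch.adj k (by omega)
    · have hkM : k = M + 1 := by omega
      subst hkM
      rw [hle (M+1) le_rfl]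
      rw [show M + 1 + 1 = M + 2 from rfl, htop]
      exact hxadj
  · intro k hk
    rcases Nat.lt_or_ge (k+2) (M+2) with h | h
    · rw [hle k (by omega), hle (k+2) (by omega)]
      exact hch.gap k (by omega)
    · have hkM : k = M := by omega
      subst hkM
      rw [hle k (by omega), htop]
      exact hxgap
  · intro k hk w h1 h2
    rcases Nat.lt_or_ge (k+2) (M+2) with h | h
    · rw [hle k (by omega)] at h1
      rw [hle (k+2) (by omega)] at h2
      rw [hle (k+1) (by omega)]
      exact hch.uniq k (by omega) w h1 h2
    · have hkM : k = M := by omega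
      subst hkM
      rw [hle k (by omega)] at h1
      rw [htop] at h2
      rw [hle (k+1) le_rfl]
      by_contra hw
      exact hxuniq w hw ⟨h1.symm, h2⟩
  · intro i j hi hj hij
    have key : ∀ m, m ≤ M + 1 → x ≠ c m := by
      intro m hm he
      rcases Nat.eq_or_lt_of_le hm with h | h
      · subst h
        exact hxadj.ne' he
      · have h1 : r (c m) ≤ r (c M) := rmono hlr hrep hch m M (by omega) (by omega)
        have h2 := hlr (c m)
        rw [← he] at h1 h2
        linarith
    rcases Nat.lt_or_ge i (M+2) with hi' | hi'
    · rcases Nat.lt_or_ge j (M+2) with hj' | hj'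
      · rw [hle i (by omega), hle j (by omega)] at hij
        exact hinj i j (by omega) (by omega) hij
      · have hj2 : j = M + 2 := by omega
        subst hj2
        rw [hle i (by omega), htop] at hij
        exact absurd hij.symm (key i (by omega))
    · have hi2 : i = M + 2 := by omega
      subst hi2
      rcases Nat.lt_or_ge j (M+2) with hj' | hj'
      · rw [htop, hle j (by omega)] at hij
        exact absurd hij (key j (by omega))
      · omega
  · rintro u v ⟨j, hj, hor⟩
    refine ⟨j, by omega, ?_⟩
    rw [hle j (by omega), hle (j+1) (by omega)]
    exact hor

include hlr hrep in
lemma stepFlip (hOK : ChainOK G l r c 1) (x : V) (hxadj : G.Adj (c 1) x)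
    (hxgap : r x < l (c 0))
    (hxuniq : ∀ w, w ≠ c 1 → ¬(G.Adj (c 0) w ∧ G.Adj w x)) :
    ChainOK G l r (fun n => match n with | 0 => x | 1 => c 1 | _ + 2 => c 0) 2 ∧
      ∀ u v, HasEdge c 1 u v →
        HasEdge (fun n => match n with | 0 => x | 1 => c 1 | _ + 2 => c 0) 2 u v := by
  obtain ⟨hch, _, _, hinj⟩ := hOK
  have hadj01 : G.Adj (c 0) (c 1) := hch.adj 0 le_rfl
  have hx0 : x ≠ c 0 := by
    intro he
    have h2 := hlr x
    rw [he] at h2 hxgap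
    linarith
  have hx1 : x ≠ c 1 := hxadj.ne'
  have h10 : c 1 ≠ c 0 := hadj01.ne'
  refine ⟨⟨⟨?_, ?_, ?_⟩, by omega, by omega, ?_⟩, ?_⟩
  · intro k hk
    match k, hk with
    | 0, _ => exact hxadj.symm
    | 1, _ => exact hadj01.symm
  · intro k hk
    match k, hk with
    | 0, _ => exact hxgap
  · intro k hk w h1 h2
    match k, hk with
    | 0, _ =>
      by_contra hw
      exact hxuniq w hw ⟨h2.symm, h1⟩
  · intro i j hi hj hij
    interval_cases i <;> interval_cases j <;>
      first
        | rfl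
        | exact absurd hij hx1
        | exact absurd hij.symm hx1
        | exact absurd hij hx0
        | exact absurd hij.symm hx0
        | exact absurd hij h10
        | exact absurd hij.symm h10
  · rintro u v ⟨j, hj, hor⟩
    have hj0 : j = 0 := by omega
    subst hj0
    rcases hor with ⟨h1, h2⟩ | ⟨h1, h2⟩
    · exact ⟨1, by omega, Or.inr ⟨h2, h1⟩⟩
    · exact ⟨1, by omega, Or.inl ⟨h2, h1⟩⟩

include hlr hrep in
lemma step (hOK : ChainOK G l r c N)
    (hnm : ¬(Mandatory G (c 0) ∧ Mandatory G (c N))) :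
    ∃ c' : ℕ → V, ChainOK G l r c' (N+1) ∧
      ∀ u v, HasEdge c N u v → HasEdge c' (N+1) u v := by
  have hch := hOK.1
  have hN1 := hOK.2.1
  have hinv := hOK.2.2.1
  by_cases hm0 : Mandatory G (c 0)
  · -- extend at the right end
    have hmN : ¬ Mandatory G (c N) := fun h => hnm ⟨hm0, h⟩
    have hNeq : N - 1 + 1 = N := by omega
    have hadjN : G.Adj (c N) (c (N-1)) := by
      have := hch.adj (N-1) (by omega)
      rw [hNeq] at this
      exact this.symm
    obtain ⟨x, hx1, hx2, hx3, hx4⟩ := bad_of_not_mandatory hadjN hmN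
    rcases disj_of_not_adj hrep (fun h => hx2 h.symm) hx3 with hL | hR
    · -- r x < l (c (N-1)) : possible only if N = 1, then flip
      rcases Nat.lt_or_ge N 2 with hN2 | hN2
      · have hN1' : N = 1 := by omega
        subst hN1'
        obtain ⟨h1, h2⟩ := stepFlip hlr hrep hOK x hx1 hL hx4
        exact ⟨_, h1, h2⟩
      · exfalso
        have ha : l (c N) ≤ r x := adj_lr hrep hx1
        have hb : l (c (N-1)) ≤ l (c N) :=
          lmono hlr hrep hch (N-1) N (by omega) (by omega) le_rfl
        linarith
    · obtain ⟨h1, h2⟩ := stepRight hlr hrep hOK x hx1 hR hx4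
      exact ⟨_, h1, h2⟩
  · -- extend at the left end
    have hadj0 : G.Adj (c 0) (c 1) := hch.adj 0 hN1
    obtain ⟨x, hx1, hx2, hx3, hx4⟩ := bad_of_not_mandatory hadj0 hm0
    rcases disj_of_not_adj hrep (fun h => hx2 h.symm) hx3 with hL | hR
    · obtain ⟨h1, h2⟩ := stepLeft hlr hrep hOK x hx1 hL hx4
      exact ⟨_, h1, h2⟩
    · exfalso
      have hlx : l x ≤ r (c 0) := adj_rl hrep hx1
      rcases Nat.lt_or_ge N 2 with hN2 | hN2
      · have hN1' : N = 1 := by omega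
        have := hinv hN1'
        linarith
      · have h1 : l (c 2) ≤ r (c 1) := adj_rl hrep (hch.adj 1 hN2)
        have h2 : r (c 0) < l (c 2) := hch.gap 0 hN2
        linarith

lemma inj_card [Fintype V] {c : ℕ → V} {N : ℕ}
    (hinj : ∀ i j, i ≤ N → j ≤ N → c i = c j → i = j) : N + 1 ≤ Fintype.card V := by
  classical
  have hnd : ((List.range (N+1)).map c).Nodup := by
    refine List.Nodup.map_on ?_ List.nodup_range
    intro a ha b hb hab
    simp only [List.mem_range] at ha hb
    exact hinj a b (by omega) (by omega) hab
  have := hnd.length_le_card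
  simpa using this

include hlr hrep in
lemma grow [Fintype V] {u v : V} :
    ∀ (n : ℕ) (c : ℕ → V) (N : ℕ), ChainOK G l r c N → HasEdge c N u v →
      Fintype.card V ≤ N + 1 + n →
      ∃ (c' : ℕ → V) (N' : ℕ), ChainOK G l r c' N' ∧ HasEdge c' N' u v ∧
        Mandatory G (c' 0) ∧ Mandatory G (c' N') := by
  intro n
  induction n with
  | zero =>
    intro c N hOK hE hcard
    by_cases h : Mandatory G (c 0) ∧ Mandatory G (c N)
    · exact ⟨c, N, hOK, hE, h.1, h.2⟩
    · exfalso
      obtain ⟨c', hOK', _⟩ := step hlr hrep hOK h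
      have := inj_card hOK'.2.2.2
      omega
  | succ n ih =>
    intro c N hOK hE hcard
    by_cases h : Mandatory G (c 0) ∧ Mandatory G (c N)
    · exact ⟨c, N, hOK, hE, h.1, h.2⟩
    · obtain ⟨c', hOK', hE'⟩ := step hlr hrep hOK h
      exact ih c' (N+1) hOK' (hE' u v hE) (by omega)

include hlr hrep in
lemma part1_aux [Fintype V] {u v : V} (huv : G.Adj u v) (hruv : r u ≤ r v) :
    ∃ a b, Mandatory G a ∧ Mandatory G b ∧ Monitors G a b s(u, v) := by
  have hOK : ChainOK G l r (fun n => match n with | 0 => u | _+1 => v) 1 := by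
    refine ⟨⟨?_, ?_, ?_⟩, le_rfl, fun _ => hruv, ?_⟩
    · intro k hk
      match k, hk with
      | 0, _ => exact huv
    · intro k hk; omega
    · intro k hk; omega
    · intro i j hi hj hij
      interval_cases i <;> interval_cases j <;>
        first
          | rfl
          | exact absurd hij huv.ne
          | exact absurd hij.symm huv.ne
  have hE : HasEdge (fun n => match n with | 0 => u | _+1 => v) 1 u v :=
    ⟨0, le_rfl, Or.inl ⟨rfl, rfl⟩⟩
  obtain ⟨c', N', hOK', hE', hm0, hmN⟩ :=
    grow hlr hrep (Fintype.card V) _ 1 hOK hE (by omega)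
  obtain ⟨j, hj, hor⟩ := hE'
  refine ⟨c' 0, c' N', hm0, hmN, ?_⟩
  have hmon := monitors_of_chain hlr hrep hOK'.1 hj
  rcases hor with ⟨h1, h2⟩ | ⟨h1, h2⟩
  · rwa [h1, h2] at hmon
  · rw [h1, h2] at hmon
    rwa [Sym2.eq_swap] at hmon

lemma walk_ne_decomp : ∀ {a b : V} (p : G.Walk a b), a ≠ b →
    ∃ (y : V) (h : G.Adj a y) (p' : G.Walk y b), p = SimpleGraph.Walk.cons h p' := by
  intro a b p hab
  cases p with
  | nil => exact absurd rfl hab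
  | cons h p' => exact ⟨_, h, p', rfl⟩

lemma mandatory_mem (hG : G.Connected) {M : Set V} (hM : MEGSet G M) {v : V}
    (hv : Mandatory G v) : v ∈ M := by
  classical
  obtain ⟨u, hadj, hsupp⟩ := hv
  have he : s(v, u) ∈ G.edgeSet := hadj
  obtain ⟨a, haM, b, hbM, hmon⟩ := hM _ he
  by_contra hvM
  have hva : v ≠ a := fun h => hvM (h ▸ haM)
  have hvb : v ≠ b := fun h => hvM (h ▸ hbM)
  obtain ⟨q, hqp, hql⟩ := SimpleGraph.Connected.exists_path_of_dist hG a b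
  have hedge : s(v, u) ∈ q.edges := hmon q hql
  have hvq : v ∈ q.support := q.fst_mem_support_of_mem_edges hedge
  set q1 := q.takeUntil v hvq with hq1def
  set q2 := q.dropUntil v hvq with hq2def
  have hspec : q1.append q2 = q := q.take_spec hvq
  have hq1p : q1.IsPath := hqp.takeUntil hvq
  have hq2p : q2.IsPath := hqp.dropUntil hvq
  obtain ⟨y, hvy, q3, hq2⟩ := walk_ne_decomp q2 hvb
  obtain ⟨xx, hvx, q4, hq1r⟩ := walk_ne_decomp q1.reverse hva
  have hq1 : q1 = (SimpleGraph.Walk.cons hvx q4).reverse := by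
    rw [← hq1r, SimpleGraph.Walk.reverse_reverse]
  -- edge lists
  have hq1e : ∀ e, e ∈ q1.edges ↔ (e = s(v, xx) ∨ e ∈ q4.edges) := by
    intro e
    rw [hq1, SimpleGraph.Walk.edges_reverse, List.mem_reverse,
      SimpleGraph.Walk.edges_cons, List.mem_cons]
  have hq2e : ∀ e, e ∈ q2.edges ↔ (e = s(v, y) ∨ e ∈ q3.edges) := by
    intro e
    rw [hq2]
    simp
  have hvq4 : v ∉ q4.support := by
    have : (SimpleGraph.Walk.cons hvx q4).IsPath := by
      rw [← SimpleGraph.Walk.isPath_reverse_iff, ← hq1]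
      exact hq1p
    exact ((SimpleGraph.Walk.cons_isPath_iff _ _).1 this).2
  have hvq3 : v ∉ q3.support := by
    have : (SimpleGraph.Walk.cons hvy q3).IsPath := by rw [← hq2]; exact hq2p
    exact ((SimpleGraph.Walk.cons_isPath_iff _ _).1 this).2
  have hnd : q.edges.Nodup := hqp.1.edges_nodup
  have hdisj : ∀ e, e ∈ q1.edges → e ∉ q2.edges := by
    have : (q1.edges ++ q2.edges).Nodup := by
      rw [← SimpleGraph.Walk.edges_append, hspec]
      exact hnd
    intro e h1 h2
    exact (List.disjoint_of_nodup_append this) h1 h2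
  have hxy : xx ≠ y := by
    intro h
    refine hdisj s(v, xx) ((hq1e _).2 (Or.inl rfl)) ((hq2e _).2 (Or.inl ?_))
    rw [h]
  -- lengths
  have hlen : q4.length + 1 + (q3.length + 1) = q.length := by
    have h1 : q1.length = q4.length + 1 := by
      rw [hq1, SimpleGraph.Walk.length_reverse]
      simp
    have h2 : q2.length = q3.length + 1 := by rw [hq2]; simp
    rw [← hspec, SimpleGraph.Walk.length_append, h1, h2]
  -- locate the edge s(v,u)
  have hu_or : u = xx ∨ u = y := by
    rcases (List.mem_append.1 (by rw [← SimpleGraph.Walk.edges_append, hspec]; exact hedge :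
        s(v,u) ∈ q1.edges ++ q2.edges)) with h | h
    · rcases (hq1e _).1 h with h' | h'
      · left
        exact Sym2.congr_right.1 h'
      · exact absurd (SimpleGraph.Walk.fst_mem_support_of_mem_edges q4 h') hvq4
    · rcases (hq2e _).1 h with h' | h'
      · right
        exact Sym2.congr_right.1 h'
      · exact absurd (SimpleGraph.Walk.fst_mem_support_of_mem_edges q3 h') hvq3
  -- the new walk in both cases leads to a contradiction
  rcases hu_or with rfl | rfl
  · -- u = xx : path is a ⋯ u, v, y ⋯ b
    have hyu : y ≠ u := fun h => hxy h.symm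
    by_cases hAdjuy : G.Adj u y
    · have W := q4.reverse.append (SimpleGraph.Walk.cons hAdjuy q3)
      have hWl : (q4.reverse.append (SimpleGraph.Walk.cons hAdjuy q3)).length + 1 = q.length := by
        simp [SimpleGraph.Walk.length_append, SimpleGraph.Walk.length_reverse]
        omega
      have := SimpleGraph.dist_le (q4.reverse.append (SimpleGraph.Walk.cons hAdjuy q3))
      omega
    · obtain ⟨w, hwv, huw, hwy⟩ := hsupp y hvy hyu hAdjuy
      set W := q4.reverse.append (SimpleGraph.Walk.cons huw (SimpleGraph.Walk.cons hwy q3))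
        with hWdef
      have hWl : W.length = G.dist a b := by
        rw [hWdef]
        simp only [SimpleGraph.Walk.length_append, SimpleGraph.Walk.length_reverse,
          SimpleGraph.Walk.length_cons]
        omega
      have hmem := hmon W hWl
      rw [hWdef] at hmem
      simp only [SimpleGraph.Walk.edges_append, SimpleGraph.Walk.edges_reverse,
        SimpleGraph.Walk.edges_cons, List.mem_append, List.mem_reverse, List.mem_cons] at hmem
      rcases hmem with h' | h' | h' | h'
      · exact absurd (SimpleGraph.Walk.fst_mem_support_of_mem_edges q4 h') hvq4
      · rcases Sym2.eq_iff.1 h' with ⟨h1, h2⟩ | ⟨h1, h2⟩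
        · exact absurd h1 hadj.ne
        · exact absurd h1.symm hwv
      · rcases Sym2.eq_iff.1 h' with ⟨h1, h2⟩ | ⟨h1, h2⟩
        · exact absurd h1.symm hwv
        · exact absurd h1 hvy.ne
      · exact absurd (SimpleGraph.Walk.fst_mem_support_of_mem_edges q3 h') hvq3
  · -- u = y : path is a ⋯ xx, v, u ⋯ b
    have hxu : xx ≠ u := hxy
    by_cases hAdjux : G.Adj u xx
    · have hWl : (q4.reverse.append (SimpleGraph.Walk.cons hAdjux.symm q3)).length + 1 =
          q.length := by
        simp [SimpleGraph.Walk.length_append, SimpleGraph.Walk.length_reverse]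
        omega
      have := SimpleGraph.dist_le (q4.reverse.append (SimpleGraph.Walk.cons hAdjux.symm q3))
      omega
    · obtain ⟨w, hwv, huw, hwx⟩ := hsupp xx hvx hxu hAdjux
      set W := q4.reverse.append (SimpleGraph.Walk.cons hwx.symm (SimpleGraph.Walk.cons huw.symm q3))
        with hWdef
      have hWl : W.length = G.dist a b := by
        rw [hWdef]
        simp only [SimpleGraph.Walk.length_append, SimpleGraph.Walk.length_reverse,
          SimpleGraph.Walk.length_cons]
        omega
      have hmem := hmon W hWl
      rw [hWdef] at hmem
      simp only [SimpleGraph.Walk.edges_append, SimpleGraph.Walk.edges_reverse,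
        SimpleGraph.Walk.edges_cons, List.mem_append, List.mem_reverse, List.mem_cons] at hmem
      rcases hmem with h' | h' | h' | h'
      · exact absurd (SimpleGraph.Walk.fst_mem_support_of_mem_edges q4 h') hvq4
      · rcases Sym2.eq_iff.1 h' with ⟨h1, h2⟩ | ⟨h1, h2⟩
        · exact absurd h1 hvx.ne
        · exact absurd h1.symm hwv
      · rcases Sym2.eq_iff.1 h' with ⟨h1, h2⟩ | ⟨h1, h2⟩
        · exact absurd h1.symm hwv
        · exact absurd h1 hadj.ne
      · exact absurd (SimpleGraph.Walk.fst_mem_support_of_mem_edges q3 h') hvq3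

end MEG7

/-- In a connected interval graph, the set of all mandatory vertices is an MEG-set,
and (since every mandatory vertex is in every MEG-set) it is the unique minimum
MEG-set: it is contained in every MEG-set. -/
theorem stmt7 {V : Type*} [Fintype V] (G : SimpleGraph V) (hG : G.Connected)
    (l r : V → ℝ) (hlr : ∀ a, l a ≤ r a)
    (hrep : ∀ a b, G.Adj a b ↔ a ≠ b ∧ l a ≤ r b ∧ l b ≤ r a) :
    MEGSet G {v | Mandatory G v} ∧
      ∀ M : Set V, MEGSet G M → {v | Mandatory G v} ⊆ M := by
  constructor
  · intro e he
    revert he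
    induction e using Sym2.ind with
    | _ u v =>
      intro he
      rw [SimpleGraph.mem_edgeSet] at he
      rcases le_total (r u) (r v) with h | h
      · obtain ⟨a, b, ha, hb, hmon⟩ := MEG7.part1_aux hlr hrep he h
        exact ⟨a, ha, b, hb, hmon⟩
      · obtain ⟨a, b, ha, hb, hmon⟩ := MEG7.part1_aux hlr hrep he.symm h
        refine ⟨a, ha, b, hb, ?_⟩
        rwa [Sym2.eq_swap] at hmon
  · intro M hM x hx
    exact MEG7.mandatory_mem hG hM hx
end

section
/- Let G be a graph, Ĝ the graph obtained from G by the following construction: for each u ∈ V(G) add new vertices u', u'' with edges uu' and u'u''; add a vertex x adjacent to all u'; add a vertex y adjacent to all u ∈ V(G); add a vertex y* adjacent only to y. If C is a vertex cover of G, then C ∪ {u'' : u ∈ V(G)} ∪ {y*} is a monitoring edge-geodetic set of Ĝ. -/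
open SimpleGraph

/-- Vertices of the reduction graph `Ĝ`: `Sum.inl u` is the original vertex `u`,
`Sum.inr (Sum.inl u)` is `u'`, `Sum.inr (Sum.inr (Sum.inl u))` is `u''`, and
`Sum.inr (Sum.inr (Sum.inr 0))`, `... 1`, `... 2` are `x`, `y`, `y*`. -/
def hatRel {V : Type*} (G : SimpleGraph V) :
    (V ⊕ V ⊕ V ⊕ Fin 3) → (V ⊕ V ⊕ V ⊕ Fin 3) → Prop
  | Sum.inl a, Sum.inl b => G.Adj a b                             -- edges of G
  | Sum.inl a, Sum.inr (Sum.inl b) => a = b                       -- u u'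
  | Sum.inr (Sum.inl a), Sum.inr (Sum.inr (Sum.inl b)) => a = b   -- u' u''
  | Sum.inr (Sum.inl _), Sum.inr (Sum.inr (Sum.inr j)) => j = 0   -- u' x
  | Sum.inl _, Sum.inr (Sum.inr (Sum.inr j)) => j = 1             -- u y
  | Sum.inr (Sum.inr (Sum.inr i)), Sum.inr (Sum.inr (Sum.inr j)) => i = 1 ∧ j = 2 -- y y*
  | _, _ => False

/-- The reduction graph `Ĝ`. -/
def hatG {V : Type*} (G : SimpleGraph V) : SimpleGraph (V ⊕ V ⊕ V ⊕ Fin 3) :=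
  SimpleGraph.fromRel (hatRel G)

namespace HatAux

variable {V : Type*}

abbrev vo (u : V) : V ⊕ V ⊕ V ⊕ Fin 3 := Sum.inl u
abbrev vp (u : V) : V ⊕ V ⊕ V ⊕ Fin 3 := Sum.inr (Sum.inl u)
abbrev vq (u : V) : V ⊕ V ⊕ V ⊕ Fin 3 := Sum.inr (Sum.inr (Sum.inl u))
abbrev vx : V ⊕ V ⊕ V ⊕ Fin 3 := Sum.inr (Sum.inr (Sum.inr 0))
abbrev vy : V ⊕ V ⊕ V ⊕ Fin 3 := Sum.inr (Sum.inr (Sum.inr 1))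
abbrev vz : V ⊕ V ⊕ V ⊕ Fin 3 := Sum.inr (Sum.inr (Sum.inr 2))

variable {G : SimpleGraph V}

lemma adj_op (u : V) : (hatG G).Adj (vo u) (vp u) := by
  simp [hatG, fromRel_adj, hatRel]
lemma adj_pq (u : V) : (hatG G).Adj (vp u) (vq u) := by
  simp [hatG, fromRel_adj, hatRel]
lemma adj_px (u : V) : (hatG G).Adj (vp u) vx := by
  simp [hatG, fromRel_adj, hatRel]
lemma adj_oy (u : V) : (hatG G).Adj (vo u) vy := by
  simp [hatG, fromRel_adj, hatRel]
lemma adj_yz : (hatG G).Adj (vy : V ⊕ V ⊕ V ⊕ Fin 3) vz := by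
  simp [hatG, fromRel_adj, hatRel]
lemma adj_oo {u v : V} (h : G.Adj u v) : (hatG G).Adj (vo u) (vo v) := by
  simp only [hatG, fromRel_adj, hatRel]
  exact ⟨by simp [h.ne], Or.inl h⟩

lemma adj_vq {u : V} {w} (h : (hatG G).Adj (vq u) w) : w = vp u := by
  rcases w with a | a | a | j
  · simp [hatG, fromRel_adj, hatRel] at h
  · simp [hatG, fromRel_adj, hatRel] at h; simp [h]
  · simp [hatG, fromRel_adj, hatRel] at h
  · simp [hatG, fromRel_adj, hatRel] at h

lemma adj_vp {u : V} {w} (h : (hatG G).Adj (vp u) w) : w = vo u ∨ w = vq u ∨ w = vx := by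
  rcases w with a | a | a | j
  · simp [hatG, fromRel_adj, hatRel] at h; simp [h]
  · simp [hatG, fromRel_adj, hatRel] at h
  · simp [hatG, fromRel_adj, hatRel] at h; simp [h]
  · simp [hatG, fromRel_adj, hatRel] at h; simp [h]

lemma adj_vo {u : V} {w} (h : (hatG G).Adj (vo u) w) :
    (∃ b, w = vo b ∧ G.Adj u b) ∨ w = vp u ∨ w = vy := by
  rcases w with a | a | a | j
  · simp [hatG, fromRel_adj, hatRel] at h
    exact Or.inl ⟨a, rfl, h.2.elim id fun h' => h'.symm⟩
  · simp [hatG, fromRel_adj, hatRel] at h; simp [h]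
  · simp [hatG, fromRel_adj, hatRel] at h
  · simp [hatG, fromRel_adj, hatRel] at h; simp [h]

lemma lipschitz_walk_bound {W : Type*} {H : SimpleGraph W} (f : W → ℕ)
    (hf : ∀ a b, H.Adj a b → f a ≤ f b + 1) {a b} (p : H.Walk a b) :
    f a ≤ f b + p.length := by
  induction p with
  | nil => simp
  | cons h q ih =>
      have := hf _ _ h
      simp only [SimpleGraph.Walk.length_cons]
      omega

/-- distance-to-`y*` lower bound. -/
def fB : (V ⊕ V ⊕ V ⊕ Fin 3) → ℕ :=
  Sum.elim (fun _ => 2) (Sum.elim (fun _ => 3) (Sum.elim (fun _ => 4) ![3, 1, 0]))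

lemma lipB (G : SimpleGraph V) : ∀ a b, (hatG G).Adj a b → fB a ≤ fB b + 1 := by
  intro a b hab
  rcases a with a | a | a | i <;> rcases b with b | b | b | j <;>
    simp_all [hatG, fromRel_adj, hatRel, fB] <;>
    first
      | omega
      | (fin_cases i <;> fin_cases j <;> simp_all)
      | (fin_cases i <;> simp_all)
      | (fin_cases j <;> simp_all)

/-- distance-to-`v''` lower bound. -/
def fA [DecidableEq V] (v : V) : (V ⊕ V ⊕ V ⊕ Fin 3) → ℕ :=
  Sum.elim (fun a => if a = v then 2 else 3)
    (Sum.elim (fun a => if a = v then 1 else 3)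
      (Sum.elim (fun a => if a = v then 0 else 4) ![2, 3, 4]))

lemma lipA [DecidableEq V] (G : SimpleGraph V) (v : V) :
    ∀ a b, (hatG G).Adj a b → fA v a ≤ fA v b + 1 := by
  intro a b hab
  rcases a with a | a | a | i <;> rcases b with b | b | b | j <;>
    simp_all [hatG, fromRel_adj, hatRel, fA] <;>
    first
      | (split_ifs <;> omega)
      | omega
      | (fin_cases i <;> fin_cases j <;> simp_all)
      | (fin_cases i <;> simp_all <;> split_ifs <;> omega)
      | (fin_cases j <;> simp_all <;> split_ifs <;> omega)

/-- another distance-to-`v''` lower bound, used for the pair `(u'', v'')`. -/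
def fC [DecidableEq V] (v : V) : (V ⊕ V ⊕ V ⊕ Fin 3) → ℕ :=
  Sum.elim (fun _ => 2)
    (Sum.elim (fun a => if a = v then 1 else 3)
      (Sum.elim (fun a => if a = v then 0 else 4) ![2, 3, 4]))

lemma lipC [DecidableEq V] (G : SimpleGraph V) (v : V) :
    ∀ a b, (hatG G).Adj a b → fC v a ≤ fC v b + 1 := by
  intro a b hab
  rcases a with a | a | a | i <;> rcases b with b | b | b | j <;>
    simp_all [hatG, fromRel_adj, hatRel, fC] <;>
    first
      | (split_ifs <;> omega)
      | omega
      | (fin_cases i <;> fin_cases j <;> simp_all)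
      | (fin_cases i <;> simp_all <;> split_ifs <;> omega)
      | (fin_cases j <;> simp_all <;> split_ifs <;> omega)

/-- the pair `(u'', y*)` monitors the edges `u''u'`, `u'u`, `uy`, `yy*`. -/
lemma monB (G : SimpleGraph V) (u : V) {e : Sym2 (V ⊕ V ⊕ V ⊕ Fin 3)}
    (he : e = s(vq u, vp u) ∨ e = s(vp u, vo u) ∨ e = s(vo u, vy) ∨ e = s(vy, vz)) :
    Monitors (hatG G) (vq u) vz e := by
  intro p hp
  have hd : (hatG G).dist (vq u) vz ≤ 4 := by
    have := dist_le (Walk.cons (adj_pq (G := G) u).symm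
      (Walk.cons (adj_op u).symm (Walk.cons (adj_oy u) (Walk.cons adj_yz Walk.nil))))
    simpa using this
  have hlow : 4 ≤ p.length := by
    have := lipschitz_walk_bound fB (lipB G) p
    simpa [fB] using this
  have hlen : p.length = 4 := le_antisymm (hp ▸ hd) hlow
  clear hp hd hlow
  cases p with
  | cons h1 p1 =>
    obtain rfl := adj_vq h1
    cases p1 with
    | cons h2 p2 =>
      rcases adj_vp h2 with rfl | rfl | rfl
      · -- went to u
        cases p2 with
        | cons h3 p3 =>
          rcases adj_vo h3 with ⟨b, rfl, hb⟩ | rfl | rfl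
          · -- at some vertex of G, one step left : impossible
            exfalso
            have := lipschitz_walk_bound fB (lipB G) p3
            simp only [Walk.length_cons] at hlen
            simp [fB] at this
            omega
          · exfalso
            have := lipschitz_walk_bound fB (lipB G) p3
            simp only [Walk.length_cons] at hlen
            simp [fB] at this
            omega
          · -- at y, one step left
            cases p3 with
            | cons h4 p4 =>
              cases p4 with
              | cons h5 p5 => simp [Walk.length_cons] at hlen
              | nil =>
                simp only [Walk.edges_cons, Walk.edges_nil]
                rcases he with rfl | rfl | rfl | rfl <;> simp
      · -- back to u'' : impossible
        exfalso
        have := lipschitz_walk_bound fB (lipB G) p2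
        simp only [Walk.length_cons] at hlen
        simp [fB] at this
        omega
      · -- to x : impossible
        exfalso
        have := lipschitz_walk_bound fB (lipB G) p2
        simp only [Walk.length_cons] at hlen
        simp [fB] at this
        omega

/-- the pair `(u, v'')` (with `uv` an edge of `G`) monitors the edge `uv`. -/
lemma monA [DecidableEq V] (G : SimpleGraph V) {u v : V} (huv : G.Adj u v) :
    Monitors (hatG G) (vo u) (vq v) s(vo u, vo v) := by
  intro p hp
  have hd : (hatG G).dist (vo u) (vq v) ≤ 3 := by
    have := dist_le (Walk.cons (adj_oo huv)
      (Walk.cons (adj_op v) (Walk.cons (adj_pq v) Walk.nil)))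
    simpa using this
  have hlow : 3 ≤ p.length := by
    have := lipschitz_walk_bound (fA v) (lipA G v) p
    simp [fA, huv.ne] at this
    omega
  have hlen : p.length = 3 := le_antisymm (hp ▸ hd) hlow
  clear hp hd hlow
  cases p with
  | cons h1 p1 =>
    rcases adj_vo h1 with ⟨b, rfl, hb⟩ | rfl | rfl
    · -- went to a neighbour b of u in G; show b = v
      have hb2 := lipschitz_walk_bound (fA v) (lipA G v) p1
      simp only [Walk.length_cons] at hlen
      simp [fA] at hb2
      have : b = v := by
        by_contra hbv
        simp [hbv] at hb2
        omega
      subst this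
      simp [Walk.edges_cons]
    · exfalso
      have := lipschitz_walk_bound (fA v) (lipA G v) p1
      simp only [Walk.length_cons] at hlen
      simp [fA, huv.ne] at this
      omega
    · exfalso
      have := lipschitz_walk_bound (fA v) (lipA G v) p1
      simp only [Walk.length_cons] at hlen
      simp [fA] at this
      omega

/-- the pair `(u'', v'')` (with `u ≠ v`) monitors the edge `u'x`. -/
lemma monC [DecidableEq V] (G : SimpleGraph V) {u v : V} (hne : u ≠ v) :
    Monitors (hatG G) (vq u) (vq v) s(vp u, vx) := by
  intro p hp
  have hd : (hatG G).dist (vq u) (vq v) ≤ 4 := by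
    have := dist_le (Walk.cons (adj_pq (G := G) u).symm
      (Walk.cons (adj_px u) (Walk.cons (adj_px v).symm (Walk.cons (adj_pq v) Walk.nil))))
    simpa using this
  have hlow : 4 ≤ p.length := by
    have := lipschitz_walk_bound (fC v) (lipC G v) p
    simp [fC, hne] at this
    omega
  have hlen : p.length = 4 := le_antisymm (hp ▸ hd) hlow
  clear hp hd hlow
  cases p with
  | nil => simp at hlen
  | cons h1 p1 =>
    obtain rfl := adj_vq h1
    cases p1 with
    | cons h2 p2 =>
      rcases adj_vp h2 with rfl | rfl | rfl
      · -- went to u : derive a contradiction by full destructuring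
        exfalso
        cases p2 with
        | cons h3 p3 =>
          cases p3 with
          | nil => simp [Walk.length_cons] at hlen
          | cons h4 p4 =>
            cases p4 with
            | cons h5 p5 => simp [Walk.length_cons] at hlen
            | nil =>
              obtain rfl := adj_vq h4.symm
              rcases adj_vo h3 with ⟨b, hb, _⟩ | hb | hb
              · simp at hb
              · simp only [Sum.inr.injEq, Sum.inl.injEq] at hb
                exact hne hb.symm
              · simp at hb
      · -- back to u'' : impossible
        exfalso
        have := lipschitz_walk_bound (fC v) (lipC G v) p2
        simp only [Walk.length_cons] at hlen
        simp [fC, hne] at this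
        omega
      · -- to x : the edge u'x is on the walk
        simp [Walk.edges_cons]

end HatAux

open HatAux in
/-- If `C` is a vertex cover of `G`, then `C ∪ U'' ∪ {y*}` is an MEG-set of `Ĝ`. -/
theorem stmt9 {V : Type*} [Fintype V] (G : SimpleGraph V)
    (hcard : 2 ≤ Fintype.card V)
    (C : Set V) (hC : ∀ a b, G.Adj a b → a ∈ C ∨ b ∈ C) :
    MEGSet (hatG G)
      ((Sum.inl '' C) ∪
        (Set.range fun u : V => (Sum.inr (Sum.inr (Sum.inl u)) : V ⊕ V ⊕ V ⊕ Fin 3)) ∪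
        {Sum.inr (Sum.inr (Sum.inr 2))}) := by
  classical
  have hne : Nonempty V := Fintype.card_pos_iff.mp (by omega)
  intro e he
  induction e using Sym2.ind with
  | _ a b =>
  rw [SimpleGraph.mem_edgeSet] at he
  -- membership helpers
  have hmemq : ∀ u : V, (vq u : V ⊕ V ⊕ V ⊕ Fin 3) ∈
      ((Sum.inl '' C) ∪
        (Set.range fun u : V => (Sum.inr (Sum.inr (Sum.inl u)) : V ⊕ V ⊕ V ⊕ Fin 3)) ∪
        {Sum.inr (Sum.inr (Sum.inr 2))}) := fun u => Or.inl (Or.inr ⟨u, rfl⟩)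
  have hmemz : (vz : V ⊕ V ⊕ V ⊕ Fin 3) ∈
      ((Sum.inl '' C) ∪
        (Set.range fun u : V => (Sum.inr (Sum.inr (Sum.inl u)) : V ⊕ V ⊕ V ⊕ Fin 3)) ∪
        {Sum.inr (Sum.inr (Sum.inr 2))}) := Or.inr rfl
  have hmemo : ∀ u ∈ C, (vo u : V ⊕ V ⊕ V ⊕ Fin 3) ∈
      ((Sum.inl '' C) ∪
        (Set.range fun u : V => (Sum.inr (Sum.inr (Sum.inl u)) : V ⊕ V ⊕ V ⊕ Fin 3)) ∪
        {Sum.inr (Sum.inr (Sum.inr 2))}) := fun u hu => Or.inl (Or.inl ⟨u, hu, rfl⟩)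
  rcases a with a | a | a | i <;> rcases b with b | b | b | j <;>
    simp only [hatG, fromRel_adj, hatRel] at he
  · -- edge of G
    obtain ⟨hne', hadj⟩ := he
    have hadj' : G.Adj a b := hadj.elim id fun h => h.symm
    rcases hC a b hadj' with ha | hb
    · exact ⟨vo a, hmemo a ha, vq b, hmemq b, monA G hadj'⟩
    · refine ⟨vo b, hmemo b hb, vq a, hmemq a, ?_⟩
      rw [Sym2.eq_swap]
      exact monA G hadj'.symm
  · -- edge u u'
    obtain rfl : a = b := he.2.elim id fun h => (False.elim h)
    refine ⟨vq a, hmemq a, vz, hmemz, ?_⟩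
    rw [Sym2.eq_swap]
    exact monB G a (Or.inr (Or.inl rfl))
  · exact absurd he.2 (by simp)
  · -- edge u y (j = 1)
    obtain ⟨-, hj⟩ := he
    have hj1 : j = 1 := hj.elim id fun h => False.elim h
    subst hj1
    exact ⟨vq a, hmemq a, vz, hmemz, monB G a (Or.inr (Or.inr (Or.inl rfl)))⟩
  · -- edge u' u (reverse)
    obtain rfl : b = a := he.2.elim (fun h => False.elim h) id
    exact ⟨vq b, hmemq b, vz, hmemz, monB G b (Or.inr (Or.inl rfl))⟩
  · exact absurd he.2 (by simp)
  · -- edge u' u''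
    obtain rfl : a = b := he.2.elim id fun h => False.elim h
    refine ⟨vq a, hmemq a, vz, hmemz, ?_⟩
    rw [Sym2.eq_swap]
    exact monB G a (Or.inl rfl)
  · -- edge u' x (j = 0)
    obtain ⟨-, hj⟩ := he
    have hj0 : j = 0 := hj.elim id fun h => False.elim h
    subst hj0
    obtain ⟨c, hc⟩ := Fintype.exists_ne_of_one_lt_card (by omega) a
    exact ⟨vq a, hmemq a, vq c, hmemq c, monC G (Ne.symm hc)⟩
  · exact absurd he.2 (by simp)
  · -- edge u'' u'
    obtain rfl : b = a := he.2.elim (fun h => False.elim h) id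
    exact ⟨vq b, hmemq b, vz, hmemz, monB G b (Or.inl rfl)⟩
  · exact absurd he.2 (by simp)
  · exact absurd he.2 (by simp)
  · -- edge y u (reverse)
    obtain ⟨-, hi⟩ := he
    have hi1 : i = 1 := hi.elim (fun h => False.elim h) id
    subst hi1
    refine ⟨vq b, hmemq b, vz, hmemz, ?_⟩
    rw [Sym2.eq_swap]
    exact monB G b (Or.inr (Or.inr (Or.inl rfl)))
  · -- edge x u' (reverse)
    obtain ⟨-, hi⟩ := he
    have hi0 : i = 0 := hi.elim (fun h => False.elim h) id
    subst hi0
    obtain ⟨c, hc⟩ := Fintype.exists_ne_of_one_lt_card (by omega) b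
    refine ⟨vq b, hmemq b, vq c, hmemq c, ?_⟩
    rw [Sym2.eq_swap]
    exact monC G (Ne.symm hc)
  · exact absurd he.2 (by simp)
  · -- edge y y* or y* y
    obtain ⟨-, hij⟩ := he
    obtain a := hne.some
    rcases hij with ⟨rfl, rfl⟩ | ⟨rfl, rfl⟩
    · exact ⟨vq a, hmemq a, vz, hmemz, monB G a (Or.inr (Or.inr (Or.inr rfl)))⟩
    · refine ⟨vq a, hmemq a, vz, hmemz, ?_⟩
      rw [Sym2.eq_swap]
      exact monB G a (Or.inr (Or.inr (Or.inr rfl)))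
end

section
/- Let Ĝ be the graph obtained from a graph G by the reduction (adding u',u'' pendant paths for each u ∈ V(G), a vertex x adjacent to all u', a vertex y adjacent to all u ∈ V(G), and a pendant y* on y). Let uv be an edge of G and a,b vertices of Ĝ with {a,b} ∩ {u,v} = ∅. Then there is at least one shortest a-b path in Ĝ not containing the edge uv. -/
open SimpleGraph

namespace StmtAux
variable {V : Type*} {G : SimpleGraph V}

abbrev o (u : V) : V ⊕ V ⊕ V ⊕ Fin 3 := Sum.inl u
abbrev pr (u : V) : V ⊕ V ⊕ V ⊕ Fin 3 := Sum.inr (Sum.inl u)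
abbrev pp (u : V) : V ⊕ V ⊕ V ⊕ Fin 3 := Sum.inr (Sum.inr (Sum.inl u))
abbrev xx (V : Type*) : V ⊕ V ⊕ V ⊕ Fin 3 := Sum.inr (Sum.inr (Sum.inr 0))
abbrev yy (V : Type*) : V ⊕ V ⊕ V ⊕ Fin 3 := Sum.inr (Sum.inr (Sum.inr 1))
abbrev ys (V : Type*) : V ⊕ V ⊕ V ⊕ Fin 3 := Sum.inr (Sum.inr (Sum.inr 2))

lemma adj_o_o {a b : V} (h : G.Adj a b) : (hatG G).Adj (o a) (o b) := by
  simp [hatG, hatRel, h, h.ne]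

lemma adj_o_pr (u : V) : (hatG G).Adj (o u) (pr u) := by simp [hatG, hatRel]
lemma adj_pr_pp (u : V) : (hatG G).Adj (pr u) (pp u) := by simp [hatG, hatRel]
lemma adj_pr_x (u : V) : (hatG G).Adj (pr u) (xx V) := by simp [hatG, hatRel]
lemma adj_o_y (u : V) : (hatG G).Adj (o u) (yy V) := by simp [hatG, hatRel]
lemma adj_y_ys : (hatG G).Adj (yy V) (ys V) := by simp [hatG, hatRel]

lemma adj_to_o {w : V ⊕ V ⊕ V ⊕ Fin 3} {u : V} (h : (hatG G).Adj w (o u)) :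
    (∃ w0, w = o w0 ∧ G.Adj u w0) ∨ w = pr u ∨ w = yy V := by
  rw [hatG, fromRel_adj] at h
  obtain ⟨hne, hr | hr⟩ := h <;>
    rcases w with w0 | w0 | w0 | j <;>
    simp only [hatRel] at hr <;> simp_all <;>
    first
      | exact hr.symm
      | exact hr

lemma reach_y [Nonempty V] (a : V ⊕ V ⊕ V ⊕ Fin 3) : (hatG G).Reachable a (yy V) := by
  obtain ⟨u0⟩ := ‹Nonempty V›
  rcases a with w | w | w | j
  · exact (adj_o_y w).reachable
  · exact ((adj_o_pr w).symm.reachable).trans (adj_o_y w).reachable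
  · exact ((adj_pr_pp w).symm.reachable).trans
      (((adj_o_pr w).symm.reachable).trans (adj_o_y w).reachable)
  · fin_cases j
    · exact ((adj_pr_x u0).symm.reachable).trans
        (((adj_o_pr u0).symm.reachable).trans (adj_o_y u0).reachable)
    · exact Reachable.refl _
    · exact (adj_y_ys (G := G)).symm.reachable

lemma hat_reachable [Nonempty V] (a b : V ⊕ V ⊕ V ⊕ Fin 3) : (hatG G).Reachable a b :=
  (reach_y a).trans (reach_y b).symm

lemma cons_shortest {H : SimpleGraph (V ⊕ V ⊕ V ⊕ Fin 3)} {a c b : V ⊕ V ⊕ V ⊕ Fin 3}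
    (h : H.Adj a c) (p' : H.Walk c b)
    (hd : (Walk.cons h p').length = H.dist a b) : p'.length = H.dist c b := by
  refine le_antisymm ?_ (SimpleGraph.dist_le p')
  obtain ⟨q, hq⟩ := (p'.reachable).exists_walk_length_eq_dist
  have h1 : H.dist a b ≤ (Walk.cons h q).length := SimpleGraph.dist_le _
  simp only [Walk.length_cons] at h1 hd
  omega

lemma key (n : ℕ) : ∀ {u v : V}, G.Adj u v → ∀ (a b : V ⊕ V ⊕ V ⊕ Fin 3)
    (p : (hatG G).Walk a b), p.length = n → p.length = (hatG G).dist a b →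
    a ≠ o u → a ≠ o v → b ≠ o u → b ≠ o v →
    ∃ q : (hatG G).Walk a b, q.length = (hatG G).dist a b ∧ s(o u, o v) ∉ q.edges := by
  induction n using Nat.strong_induction_on with
  | _ n IH =>
  intro u v huv a b p hn hd hau hav hbu hbv
  have huvne : u ≠ v := huv.ne
  cases p with
  | nil => exact ⟨.nil, hd, by simp⟩
  | @cons _ c _ h p' =>
    by_cases hc : c = o u ∨ c = o v
    · -- normalize so that c = o u
      obtain ⟨u, v, huv, hedge, hau, hav, hbu, hbv, rfl⟩ :
          ∃ u' v', G.Adj u' v' ∧ s(o u', o v') = s(o u, o v) ∧ a ≠ o u' ∧ a ≠ o v' ∧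
            b ≠ o u' ∧ b ≠ o v' ∧ c = o u' := by
        rcases hc with rfl | rfl
        · exact ⟨u, v, huv, rfl, hau, hav, hbu, hbv, rfl⟩
        · exact ⟨v, u, huv.symm, Sym2.eq_swap, hav, hau, hbv, hbu, rfl⟩
      rw [← hedge]
      have huvne : u ≠ v := huv.ne
      clear hedge hc
      cases p' with
      | nil => exact absurd rfl hbu
      | @cons _ c' _ h' p'' =>
        by_cases hc' : c' = o v
        · subst hc'
          cases p'' with
          | nil => exact absurd rfl hbv
          | @cons _ d _ h'' p''' =>
            -- lengths and distances
            have hd1 : (Walk.cons h' (Walk.cons h'' p''')).length = (hatG G).dist (o u) b :=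
              cons_shortest h _ hd
            have hd2 : (Walk.cons h'' p''').length = (hatG G).dist (o v) b :=
              cons_shortest h' _ hd1
            have hd3 : p'''.length = (hatG G).dist d b := cons_shortest h'' _ hd2
            have hlen : p'''.length + 3 = (hatG G).dist a b := by
              simp only [Walk.length_cons] at hd; omega
            -- rule out d = o u
            have hdu : d ≠ o u := by
              rintro rfl
              have := SimpleGraph.dist_le (Walk.cons h p''')
              simp only [Walk.length_cons] at this
              omega
            have hdv : d ≠ o v := h''.ne'
            -- case analysis on a and d
            have hacase := adj_to_o h
            have hdcase := adj_to_o h''.symm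
            -- first: rule out a = yy
            rcases hacase with ⟨w0, rfl, hw0⟩ | rfl | rfl
            · rcases hdcase with ⟨z0, rfl, hz0⟩ | rfl | rfl
              · -- both original: shortcut through y, contradiction
                exfalso
                have := SimpleGraph.dist_le
                  (Walk.cons (adj_o_y w0) (Walk.cons (adj_o_y z0).symm p'''))
                simp only [Walk.length_cons] at this
                omega
              · -- d = pr v : replacement w0 - y - v - v'
                obtain ⟨q, hq1, hq2⟩ := IH p'''.length (by omega) huv (pr v) b p''' rfl hd3
                  hdu hdv hbu hbv
                refine ⟨Walk.cons (adj_o_y w0)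
                  (Walk.cons (adj_o_y v).symm (Walk.cons (adj_o_pr v) q)), ?_, ?_⟩
                · simp only [Walk.length_cons, hq1]; omega
                · simp only [Walk.edges_cons, List.mem_cons, not_or]
                  refine ⟨?_, ?_, ?_, hq2⟩ <;> simp [Sym2.eq_iff]
              · -- d = yy : shortcut a - u - y, contradiction
                exfalso
                have := SimpleGraph.dist_le (Walk.cons h (Walk.cons (adj_o_y u) p'''))
                simp only [Walk.length_cons] at this
                omega
            · -- a = pr u
              rcases hdcase with ⟨z0, rfl, hz0⟩ | rfl | rfl
              · -- d original : replacement u' - u - y - z0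
                obtain ⟨q, hq1, hq2⟩ := IH p'''.length (by omega) huv (o z0) b p''' rfl hd3
                  hdu hdv hbu hbv
                refine ⟨Walk.cons (adj_o_pr u).symm
                  (Walk.cons (adj_o_y u) (Walk.cons (adj_o_y z0).symm q)), ?_, ?_⟩
                · simp only [Walk.length_cons, hq1]; omega
                · simp only [Walk.edges_cons, List.mem_cons, not_or]
                  refine ⟨?_, ?_, ?_, hq2⟩ <;> simp [Sym2.eq_iff]
              · -- d = pr v : shortcut u' - x - v', contradiction
                exfalso
                have := SimpleGraph.dist_le
                  (Walk.cons (adj_pr_x u) (Walk.cons (adj_pr_x v).symm p'''))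
                simp only [Walk.length_cons] at this
                omega
              · -- d = yy : shortcut a - u - y, contradiction
                exfalso
                have := SimpleGraph.dist_le (Walk.cons h (Walk.cons (adj_o_y u) p'''))
                simp only [Walk.length_cons] at this
                omega
            · -- a = yy : shortcut y - v - d, contradiction
              exfalso
              have := SimpleGraph.dist_le (Walk.cons (adj_o_y v).symm (Walk.cons h'' p'''))
              simp only [Walk.length_cons] at this
              omega
        · -- c' ∉ {o u, o v} : recurse on p''
          have hc'u : c' ≠ o u := h'.ne'
          have hd1 : (Walk.cons h' p'').length = (hatG G).dist (o u) b := cons_shortest h _ hd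
          have hd2 : p''.length = (hatG G).dist c' b := cons_shortest h' _ hd1
          obtain ⟨q, hq1, hq2⟩ := IH p''.length
            (by simp only [Walk.length_cons] at hn; omega) huv c' b p'' rfl hd2 hc'u hc' hbu hbv
          refine ⟨Walk.cons h (Walk.cons h' q), ?_, ?_⟩
          · simp only [Walk.length_cons] at hd ⊢; omega
          · simp only [Walk.edges_cons, List.mem_cons, not_or]
            refine ⟨?_, ?_, hq2⟩ <;> simp [Sym2.eq_iff] <;> tauto
    · -- c ∉ {o u, o v} : recurse on p'
      push_neg at hc
      obtain ⟨hcu, hcv⟩ := hc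
      have hd1 : p'.length = (hatG G).dist c b := cons_shortest h _ hd
      obtain ⟨q, hq1, hq2⟩ := IH p'.length
        (by simp only [Walk.length_cons] at hn; omega) huv c b p' rfl hd1 hcu hcv hbu hbv
      refine ⟨Walk.cons h q, ?_, ?_⟩
      · simp only [Walk.length_cons] at hd ⊢; omega
      · simp only [Walk.edges_cons, List.mem_cons, not_or]
        refine ⟨?_, hq2⟩
        simp [Sym2.eq_iff]
        tauto
end StmtAux

/-- For an edge `uv` of `G` and vertices `a, b` of `Ĝ` with `{a,b} ∩ {u,v} = ∅`,
some shortest `a-b` path in `Ĝ` avoids the edge `uv`. -/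
theorem stmt10 {V : Type*} [Fintype V] (G : SimpleGraph V)
    (hcard : 2 ≤ Fintype.card V)
    (u v : V) (huv : G.Adj u v)
    (a b : V ⊕ V ⊕ V ⊕ Fin 3)
    (ha : a ≠ Sum.inl u ∧ a ≠ Sum.inl v) (hb : b ≠ Sum.inl u ∧ b ≠ Sum.inl v) :
    ∃ p : (hatG G).Walk a b, p.length = (hatG G).dist a b ∧
      s(Sum.inl u, Sum.inl v) ∉ p.edges := by
  have : Nonempty V := Fintype.card_pos_iff.mp (by omega)
  obtain ⟨p, hp⟩ := (StmtAux.hat_reachable (G := G) a b).exists_walk_length_eq_dist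
  exact StmtAux.key p.length huv a b p rfl hp ha.1 ha.2 hb.1 hb.2
end

section
/- Let Ĝ be obtained from G by the reduction (pendant paths u-u'-u'' for each u, vertex x adjacent to all u', vertex y adjacent to all u ∈ V(G), pendant y* on y). If M is a monitoring edge-geodetic set of Ĝ, then M ∩ V(G) is a vertex cover of G. -/
open SimpleGraph

section Aux

variable {V : Type*} {G : SimpleGraph V}

lemma adj_u_y (a : V) : (hatG G).Adj (Sum.inl a) (Sum.inr (Sum.inr (Sum.inr 1))) := by
  rw [hatG, fromRel_adj]; exact ⟨by simp, Or.inl rfl⟩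

lemma adj_u'_u (a : V) : (hatG G).Adj (Sum.inr (Sum.inl a)) (Sum.inl a) := by
  rw [hatG, fromRel_adj]; exact ⟨by simp, Or.inr rfl⟩

lemma adj_u'_x (a : V) : (hatG G).Adj (Sum.inr (Sum.inl a)) (Sum.inr (Sum.inr (Sum.inr 0))) := by
  rw [hatG, fromRel_adj]; exact ⟨by simp, Or.inl rfl⟩

lemma adj_u'_u'' (a : V) :
    (hatG G).Adj (Sum.inr (Sum.inl a)) (Sum.inr (Sum.inr (Sum.inl a))) := by
  rw [hatG, fromRel_adj]; exact ⟨by simp, Or.inl rfl⟩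

lemma adj_y_ystar :
    (hatG G).Adj (Sum.inr (Sum.inr (Sum.inr 1))) (Sum.inr (Sum.inr (Sum.inr 2))) := by
  rw [hatG, fromRel_adj]; exact ⟨by simp [Fin.ext_iff], Or.inl ⟨rfl, rfl⟩⟩

/-- Classification of the neighbours of an original vertex in `Ĝ`. -/
lemma adj_inl {w : V ⊕ V ⊕ V ⊕ Fin 3} {a : V} (h : (hatG G).Adj w (Sum.inl a)) :
    (∃ c, w = Sum.inl c ∧ G.Adj a c) ∨ w = Sum.inr (Sum.inl a) ∨
      w = Sum.inr (Sum.inr (Sum.inr 1)) := by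
  rw [hatG, fromRel_adj] at h
  obtain ⟨hne, h | h⟩ := h <;> rcases w with c | c | c | j
  · exact Or.inl ⟨c, rfl, (h : G.Adj c a).symm⟩
  · exact (h : False).elim
  · exact (h : False).elim
  · exact (h : False).elim
  · exact Or.inl ⟨c, rfl, (h : G.Adj a c)⟩
  · exact Or.inr (Or.inl (by rw [(h : a = c)]))
  · exact (h : False).elim
  · exact Or.inr (Or.inr (by rw [(h : j = 1)]))

/-- Every vertex of `Ĝ` is reachable from `y`. -/
lemma reach_y (v0 : V) (w : V ⊕ V ⊕ V ⊕ Fin 3) :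
    (hatG G).Reachable w (Sum.inr (Sum.inr (Sum.inr 1))) := by
  have hu : ∀ a : V, (hatG G).Reachable (Sum.inl a) (Sum.inr (Sum.inr (Sum.inr 1))) :=
    fun a => (adj_u_y a).reachable
  have hu' : ∀ a : V, (hatG G).Reachable (Sum.inr (Sum.inl a)) (Sum.inr (Sum.inr (Sum.inr 1))) :=
    fun a => (adj_u'_u a).reachable.trans (hu a)
  rcases w with a | a | a | j
  · exact hu a
  · exact hu' a
  · exact (adj_u'_u'' a).reachable.symm.trans (hu' a)
  · fin_cases j
    · exact (adj_u'_x v0).reachable.symm.trans (hu' v0)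
    · exact Reachable.refl _
    · exact adj_y_ystar.symm.reachable

/-- A path containing the edge `s(a,b)` splits as a walk to `a`, the edge, and a walk
from `b` (in one of the two orientations), with the edge not occurring elsewhere. -/
lemma walk_split {V : Type*} {G : SimpleGraph V} {a b : V} :
    ∀ {u v : V} (p : G.Walk u v), p.IsPath → s(a, b) ∈ p.edges →
    (∃ (h : G.Adj a b) (q1 : G.Walk u a) (q3 : G.Walk b v),
        p = q1.append (Walk.cons h q3) ∧ s(a, b) ∉ q1.edges ∧ s(a, b) ∉ q3.edges) ∨
    (∃ (h : G.Adj b a) (q1 : G.Walk u b) (q3 : G.Walk a v),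
        p = q1.append (Walk.cons h q3) ∧ s(a, b) ∉ q1.edges ∧ s(a, b) ∉ q3.edges) := by
  intro u v p
  induction p with
  | nil => intro _ he; simp at he
  | @cons u t v h' q ih =>
    intro hp he
    rw [Walk.edges_cons, List.mem_cons] at he
    obtain ⟨hq, hu⟩ := (Walk.cons_isPath_iff _ _).mp hp
    rcases he with he | he
    · rw [Sym2.eq_iff] at he
      rcases he with ⟨rfl, rfl⟩ | ⟨rfl, rfl⟩
      · refine Or.inl ⟨h', Walk.nil, q, by simp, by simp, fun hmem => hu ?_⟩
        exact q.fst_mem_support_of_mem_edges hmem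
      · refine Or.inr ⟨h', Walk.nil, q, by simp, by simp, fun hmem => hu ?_⟩
        exact q.snd_mem_support_of_mem_edges hmem
    · have hne : s(a, b) ≠ s(u, t) := by
        intro heq
        rw [heq] at he
        exact hu (q.fst_mem_support_of_mem_edges he)
      rcases ih hq he with ⟨h, q1, q3, rfl, h1, h3⟩ | ⟨h, q1, q3, rfl, h1, h3⟩
      · exact Or.inl ⟨h, Walk.cons h' q1, q3, by rw [Walk.cons_append],
          by simp [hne, h1], h3⟩
      · exact Or.inr ⟨h, Walk.cons h' q1, q3, by rw [Walk.cons_append],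
          by simp [hne, h1], h3⟩

/-- Core argument: a pair `u, v` avoiding both `a` and `b` cannot monitor
the edge `ab`, given a geodesic decomposition across the edge. -/
lemma coreDir {a b : V} {u v : V ⊕ V ⊕ V ⊕ Fin 3}
    (hua : u ≠ Sum.inl a) (hvb : v ≠ Sum.inl b)
    (q1 : (hatG G).Walk u (Sum.inl a)) (q3 : (hatG G).Walk (Sum.inl b) v)
    (hd : q1.length + 1 + q3.length = (hatG G).dist u v)
    (h1 : s(Sum.inl a, Sum.inl b) ∉ q1.edges)
    (h3 : s(Sum.inl a, Sum.inl b) ∉ q3.edges)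
    (hmon : Monitors (hatG G) u v s(Sum.inl a, Sum.inl b)) : False := by
  obtain ⟨w, hw, r, hr⟩ := Walk.exists_eq_cons_of_ne (Ne.symm hua) q1.reverse
  have hq1 : q1 = r.reverse.concat hw.symm := by
    rw [← q1.reverse_reverse, hr, Walk.reverse_cons, Walk.concat_eq_append]
  obtain ⟨z, hz, q3', hq3⟩ := Walk.exists_eq_cons_of_ne (fun h => hvb h.symm) q3
  set q1' := r.reverse with hq1'
  have hlen1 : q1.length = q1'.length + 1 := by rw [hq1, Walk.length_concat]
  have hlen3 : q3.length = q3'.length + 1 := by rw [hq3, Walk.length_cons]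
  have h1' : s(Sum.inl a, Sum.inl b) ∉ q1'.edges := by
    intro hmem; exact h1 (by rw [hq1, Walk.edges_concat]; simp [hmem])
  have h3' : s(Sum.inl a, Sum.inl b) ∉ q3'.edges := by
    intro hmem; exact h3 (by rw [hq3, Walk.edges_cons]; exact List.mem_cons_of_mem _ hmem)
  have hwA : (hatG G).Adj w (Sum.inl a) := hw.symm
  have hzB : (hatG G).Adj z (Sum.inl b) := hz.symm
  rcases adj_inl hwA with ⟨c, rfl, hac⟩ | rfl | rfl
  · rcases adj_inl hzB with ⟨d, rfl, hbd⟩ | rfl | rfl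
    · -- w = c, z = d : strictly shorter walk through y
      have := (hatG G).dist_le
        (q1'.append (Walk.cons (adj_u_y c) (Walk.cons (adj_u_y d).symm q3')))
      simp only [Walk.length_append, Walk.length_cons] at this
      omega
    · -- z = b' : equally long walk  c → y → b → b'  avoiding the edge ab
      have hp' := hmon (q1'.append (Walk.cons (adj_u_y c)
          (Walk.cons (adj_u_y b).symm (Walk.cons (adj_u'_u b).symm q3'))))
        (by simp only [Walk.length_append, Walk.length_cons]; omega)
      simp only [Walk.edges_append, Walk.edges_cons, List.mem_append, List.mem_cons] at hp'
      rcases hp' with hmem | hmem | hmem | hmem | hmem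
      · exact h1' hmem
      · rw [Sym2.eq_iff] at hmem; simp at hmem
      · rw [Sym2.eq_iff] at hmem; simp at hmem
      · rw [Sym2.eq_iff] at hmem; simp at hmem
      · exact h3' hmem
    · -- z = y : strictly shorter walk  a → y
      have := (hatG G).dist_le (q1.append (Walk.cons (adj_u_y a) q3'))
      simp only [Walk.length_append, Walk.length_cons] at this
      omega
  · rcases adj_inl hzB with ⟨d, rfl, hbd⟩ | rfl | rfl
    · -- w = a', z = d : equally long walk  a' → a → y → d  avoiding the edge ab
      have hp' := hmon (q1'.append (Walk.cons (adj_u'_u a)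
          (Walk.cons (adj_u_y a) (Walk.cons (adj_u_y d).symm q3'))))
        (by simp only [Walk.length_append, Walk.length_cons]; omega)
      simp only [Walk.edges_append, Walk.edges_cons, List.mem_append, List.mem_cons] at hp'
      rcases hp' with hmem | hmem | hmem | hmem | hmem
      · exact h1' hmem
      · rw [Sym2.eq_iff] at hmem; simp at hmem
      · rw [Sym2.eq_iff] at hmem; simp at hmem
      · rw [Sym2.eq_iff] at hmem; simp at hmem
      · exact h3' hmem
    · -- w = a', z = b' : strictly shorter walk through x
      have := (hatG G).dist_le (q1'.append (Walk.cons (adj_u'_x a)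
          (Walk.cons (adj_u'_x b).symm q3')))
      simp only [Walk.length_append, Walk.length_cons] at this
      omega
    · -- z = y : strictly shorter walk  a → y
      have := (hatG G).dist_le (q1.append (Walk.cons (adj_u_y a) q3'))
      simp only [Walk.length_append, Walk.length_cons] at this
      omega
  · -- w = y : strictly shorter walk  y → b
    have := (hatG G).dist_le (q1'.append (Walk.cons (adj_u_y b).symm q3))
    simp only [Walk.length_append, Walk.length_cons] at this
    omega

end Aux

/-- If `M` is an MEG-set of `Ĝ`, then `M ∩ V(G)` is a vertex cover of `G`. -/
theorem stmt11 {V : Type*} [Fintype V] (G : SimpleGraph V)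
    (hcard : 2 ≤ Fintype.card V)
    (M : Set (V ⊕ V ⊕ V ⊕ Fin 3)) (hM : MEGSet (hatG G) M) :
    ∀ a b, G.Adj a b → Sum.inl a ∈ M ∨ Sum.inl b ∈ M := by
  intro a b hab
  have he : s(Sum.inl a, Sum.inl b) ∈ (hatG G).edgeSet := by
    rw [mem_edgeSet, hatG, fromRel_adj]
    exact ⟨by simp [hab.ne], Or.inl hab⟩
  obtain ⟨u, hu, v, hv, hmon⟩ := hM _ he
  by_contra hcon
  push_neg at hcon
  have hua : u ≠ Sum.inl a := fun h => hcon.1 (h ▸ hu)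
  have hub : u ≠ Sum.inl b := fun h => hcon.2 (h ▸ hu)
  have hva : v ≠ Sum.inl a := fun h => hcon.1 (h ▸ hv)
  have hvb : v ≠ Sum.inl b := fun h => hcon.2 (h ▸ hv)
  have hV : Nonempty V := Fintype.card_pos_iff.mp (by omega)
  obtain ⟨v0⟩ := hV
  have hreach : (hatG G).Reachable u v := (reach_y v0 u).trans (reach_y v0 v).symm
  obtain ⟨p, hp⟩ := hreach.exists_walk_length_eq_dist
  have hpath : p.IsPath := p.isPath_of_length_eq_dist hp
  have hmem : s(Sum.inl a, Sum.inl b) ∈ p.edges := hmon p hp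
  rcases walk_split p hpath hmem with ⟨h, q1, q3, heq, h1, h3⟩ | ⟨h, q1, q3, heq, h1, h3⟩
  · refine coreDir hua hvb q1 q3 ?_ h1 h3 hmon
    rw [← hp, heq]; simp only [Walk.length_append, Walk.length_cons]; omega
  · refine coreDir hub hva q1 q3 ?_ (by rwa [Sym2.eq_swap]) (by rwa [Sym2.eq_swap])
      (by rwa [Sym2.eq_swap])
    rw [← hp, heq]; simp only [Walk.length_append, Walk.length_cons]; omega
end

section
/- Let Ĝ be obtained from G (with n vertices) by the reduction. Then G has a vertex cover of size at most k if and only if Ĝ has a monitoring edge-geodetic set of size at most k + n + 1. -/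
open SimpleGraph

namespace Hat

variable {V : Type*}

abbrev vA (w : V) : V ⊕ V ⊕ V ⊕ Fin 3 := Sum.inl w
abbrev vB (w : V) : V ⊕ V ⊕ V ⊕ Fin 3 := Sum.inr (Sum.inl w)
abbrev vC (w : V) : V ⊕ V ⊕ V ⊕ Fin 3 := Sum.inr (Sum.inr (Sum.inl w))
abbrev vX : V ⊕ V ⊕ V ⊕ Fin 3 := Sum.inr (Sum.inr (Sum.inr 0))
abbrev vY : V ⊕ V ⊕ V ⊕ Fin 3 := Sum.inr (Sum.inr (Sum.inr 1))
abbrev vZ : V ⊕ V ⊕ V ⊕ Fin 3 := Sum.inr (Sum.inr (Sum.inr 2))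

variable {G : SimpleGraph V}

lemma adj_C {w : V} {c : V ⊕ V ⊕ V ⊕ Fin 3} : (hatG G).Adj (vC w) c ↔ c = vB w := by
  constructor
  · rintro ⟨hne, h | h⟩ <;>
      rcases c with a | a | a | j <;> simp_all [hatRel]
  · rintro rfl
    exact ⟨by simp, Or.inr rfl⟩

lemma adj_Z {c : V ⊕ V ⊕ V ⊕ Fin 3} : (hatG G).Adj vZ c ↔ c = vY := by
  constructor
  · rintro ⟨hne, h | h⟩ <;>
      rcases c with a | a | a | j <;> simp_all [hatRel]
  · rintro rfl
    exact ⟨by simp, Or.inr ⟨rfl, rfl⟩⟩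

lemma adj_B {w : V} {c : V ⊕ V ⊕ V ⊕ Fin 3} :
    (hatG G).Adj (vB w) c ↔ c = vA w ∨ c = vC w ∨ c = vX := by
  constructor
  · rintro ⟨hne, h | h⟩ <;>
      rcases c with a | a | a | j <;> simp_all [hatRel]
  · rintro (rfl | rfl | rfl)
    · exact ⟨by simp, Or.inr rfl⟩
    · exact ⟨by simp, Or.inl rfl⟩
    · exact ⟨by simp, Or.inl rfl⟩

lemma adj_X {c : V ⊕ V ⊕ V ⊕ Fin 3} : (hatG G).Adj vX c ↔ ∃ z, c = vB z := by
  constructor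
  · rintro ⟨hne, h | h⟩ <;>
      rcases c with a | a | a | j <;> simp_all [hatRel]
  · rintro ⟨z, rfl⟩
    exact ⟨by simp, Or.inr rfl⟩

lemma adj_Y {c : V ⊕ V ⊕ V ⊕ Fin 3} :
    (hatG G).Adj vY c ↔ (∃ z, c = vA z) ∨ c = vZ := by
  constructor
  · rintro ⟨hne, h | h⟩ <;>
      rcases c with a | a | a | j <;> simp_all [hatRel]
  · rintro (⟨z, rfl⟩ | rfl)
    · exact ⟨by simp, Or.inr rfl⟩
    · exact ⟨by simp, Or.inl ⟨rfl, rfl⟩⟩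

lemma adj_A {w : V} {c : V ⊕ V ⊕ V ⊕ Fin 3} :
    (hatG G).Adj (vA w) c ↔ (∃ z, G.Adj w z ∧ c = vA z) ∨ c = vB w ∨ c = vY := by
  constructor
  · rintro ⟨hne, h | h⟩ <;> rcases c with a | a | a | j
    · exact Or.inl ⟨a, h, rfl⟩
    · exact Or.inr (Or.inl (by simp_all [hatRel]))
    · simp_all [hatRel]
    · simp only [hatRel] at h; subst h; exact Or.inr (Or.inr rfl)
    · exact Or.inl ⟨a, h.symm, rfl⟩
    · simp_all [hatRel]
    · simp_all [hatRel]
    · simp_all [hatRel]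
  · rintro (⟨z, hz, rfl⟩ | rfl | rfl)
    · exact ⟨by simp [hz.ne], Or.inl hz⟩
    · exact ⟨by simp, Or.inl rfl⟩
    · exact ⟨by simp, Or.inl rfl⟩



section Generic
variable {W : Type*} {H : SimpleGraph W}

lemma monitors_symm {a b : W} {e : Sym2 W} (h : Monitors H a b e) : Monitors H b a e := by
  intro p hp
  have := h p.reverse (by rw [SimpleGraph.Walk.length_reverse, hp, SimpleGraph.dist_comm])
  simpa using this

lemma not_monitors_self {a : W} {e : Sym2 W} : ¬ Monitors H a a e := by
  intro h
  simpa using h SimpleGraph.Walk.nil (by simp [SimpleGraph.dist_self])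

/-- If `q` is a walk no longer than every walk, its length is the distance. -/
lemma length_eq_dist_of_min {a b : W} (q : H.Walk a b)
    (hq : ∀ p : H.Walk a b, q.length ≤ p.length) : q.length = H.dist a b := by
  refine le_antisymm ?_ (SimpleGraph.dist_le q)
  obtain ⟨p, hp⟩ := SimpleGraph.Reachable.exists_walk_length_eq_dist ⟨q⟩
  exact hp ▸ hq p

lemma not_monitors_of_min {a b : W} {e : Sym2 W} (q : H.Walk a b)
    (hq : ∀ p : H.Walk a b, q.length ≤ p.length) (he : e ∉ q.edges) :
    ¬ Monitors H a b e :=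
  fun h => he (h q (length_eq_dist_of_min q hq))

lemma one_le_length {a b : W} (hne : a ≠ b) (p : H.Walk a b) : 1 ≤ p.length := by
  cases p with
  | nil => exact absurd rfl hne
  | cons h q => simp

lemma two_le_length {a b : W} (hne : a ≠ b) (hadj : ¬ H.Adj a b) (p : H.Walk a b) :
    2 ≤ p.length := by
  cases p with
  | nil => exact absurd rfl hne
  | cons h q =>
    cases q with
    | nil => exact absurd h hadj
    | cons h2 q2 => simp only [SimpleGraph.Walk.length_cons]; omega

lemma three_le_length {a b : W} (hne : a ≠ b) (hadj : ¬ H.Adj a b)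
    (hcom : ∀ c, H.Adj a c → H.Adj c b → False) (p : H.Walk a b) :
    3 ≤ p.length := by
  cases p with
  | nil => exact absurd rfl hne
  | cons h q =>
    cases q with
    | nil => exact absurd h hadj
    | cons h' q' =>
      cases q' with
      | nil => exact absurd h' (fun hh => hcom _ h hh)
      | cons h'' q'' => simp only [SimpleGraph.Walk.length_cons]; omega

lemma walk_length_three {a b : W} (p : H.Walk a b) (hp : p.length = 3) :
    ∃ (c d : W) (h1 : H.Adj a c) (h2 : H.Adj c d) (h3 : H.Adj d b),
      p.edges = [s(a, c), s(c, d), s(d, b)] := by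
  cases p with
  | nil => simp at hp
  | cons h1 q =>
    cases q with
    | nil => simp at hp
    | cons h2 q' =>
      cases q' with
      | nil => simp at hp
      | cons h3 q'' =>
        cases q'' with
        | nil => exact ⟨_, _, h1, h2, h3, by simp⟩
        | cons h4 q3 => simp at hp

lemma walk_length_four {a b : W} (p : H.Walk a b) (hp : p.length = 4) :
    ∃ (c d e : W) (h1 : H.Adj a c) (h2 : H.Adj c d) (h3 : H.Adj d e) (h4 : H.Adj e b),
      p.edges = [s(a, c), s(c, d), s(d, e), s(e, b)] := by
  cases p with
  | nil => simp at hp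
  | cons h1 q =>
    obtain ⟨c, d, h2, h3, h4, he⟩ := walk_length_three q (by simpa using hp)
    exact ⟨_, c, d, h1, h2, h3, h4, by simp [he]⟩

end Generic

section
variable {G : SimpleGraph V}

lemma four_le_from_C {w : V} {b : V ⊕ V ⊕ V ⊕ Fin 3}
    (h1 : b ≠ vA w) (h2 : ¬ (hatG G).Adj (vA w) b) (h3 : b ≠ vC w) (h4 : b ≠ vB w)
    (h5 : b ≠ vX) (h6 : ¬ (hatG G).Adj vX b)
    (p : (hatG G).Walk (vC w) b) : 4 ≤ p.length := by
  cases p with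
  | nil => exact absurd rfl h3.symm
  | cons h q =>
    have hc := adj_C.mp h
    subst hc
    cases q with
    | nil => exact absurd rfl h4.symm
    | cons h' q' =>
      rcases adj_B.mp h' with hc2 | hc2 | hc2 <;> subst hc2 <;>
        simp only [SimpleGraph.Walk.length_cons]
      · have := two_le_length (Ne.symm h1) h2 q'
        omega
      · have := two_le_length (Ne.symm h3) (by rw [adj_C]; exact h4.symm ∘ Eq.symm) q'
        omega
      · have := two_le_length (Ne.symm h5) h6 q'
        omega

lemma four_le_X_Z (p : (hatG G).Walk vX vZ) : 4 ≤ p.length := by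
  cases p with
  | cons h q =>
    obtain ⟨z, hz⟩ := adj_X.mp h
    subst hz
    cases q with
    | cons h' q' =>
      rcases adj_B.mp h' with hc2 | hc2 | hc2 <;> subst hc2 <;>
        simp only [SimpleGraph.Walk.length_cons]
      · have := two_le_length (by simp) (by simp [adj_A]) q'
        omega
      · have := two_le_length (by simp) (by simp [adj_C]) q'
        omega
      · have := two_le_length (by simp) (by simp [adj_X]) q'
        omega

/-- canonical geodesic from u'' to y* -/
def walkCZ (u : V) : (hatG G).Walk (vC u) vZ :=
  .cons (adj_C.mpr rfl) (.cons (adj_B.mpr (Or.inl rfl))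
    (.cons (adj_A.mpr (Or.inr (Or.inr rfl))) (.cons (adj_Y.mpr (Or.inr rfl)) .nil)))

lemma dist_CZ (u : V) : (hatG G).dist (vC u) vZ = 4 :=
  (length_eq_dist_of_min (walkCZ u) (fun p => by
    exact four_le_from_C (by simp) (by simp [adj_A])
      (by simp) (by simp) (by simp) (by simp [adj_X]) p)).symm

lemma monitors_CZ {u : V} {e : Sym2 (V ⊕ V ⊕ V ⊕ Fin 3)}
    (he : e ∈ [s(vC u, vB u), s(vB u, vA u), s(vA u, vY), s(vY, vZ)]) :
    Monitors (hatG G) (vC u) vZ e := by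
  intro p hp
  rw [dist_CZ] at hp
  obtain ⟨c, d, ee, h1, h2, h3, h4, hedges⟩ := walk_length_four p hp
  have hc : c = vB u := adj_C.mp h1
  subst hc
  have he4 : ee = vY := adj_Z.mp h4.symm
  subst he4
  have hd : d = vA u := by
    rcases adj_B.mp h2 with h | h | h
    · exact h
    · subst h; exact absurd (adj_C.mp h3) (by simp)
    · subst h; obtain ⟨z, hz⟩ := adj_X.mp h3; simp at hz
  subst hd
  rw [hedges]
  simpa using he

/-- canonical geodesic from u'' to v'' via x -/
def walkCC (u v : V) : (hatG G).Walk (vC u) (vC v) :=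
  .cons (adj_C.mpr rfl) (.cons (adj_B.mpr (Or.inr (Or.inr rfl)))
    (.cons (adj_X.mpr ⟨v, rfl⟩)
      (.cons ((adj_B (w := v)).mpr (Or.inr (Or.inl rfl))) .nil)))

lemma dist_CC {u v : V} (huv : u ≠ v) : (hatG G).dist (vC u) (vC v) = 4 :=
  (length_eq_dist_of_min (walkCC u v) (fun p => by
    exact four_le_from_C (by simp) (by simp [adj_A])
      (by simp [huv.symm]) (by simp) (by simp) (by simp [adj_X, huv.symm]) p)).symm

lemma monitors_CC {u v : V} (huv : u ≠ v) {e : Sym2 (V ⊕ V ⊕ V ⊕ Fin 3)}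
    (he : e ∈ [s(vC u, vB u), s(vB u, vX), s(vX, vB v), s(vB v, vC v)]) :
    Monitors (hatG G) (vC u) (vC v) e := by
  intro p hp
  rw [dist_CC huv] at hp
  obtain ⟨c, d, ee, h1, h2, h3, h4, hedges⟩ := walk_length_four p hp
  have hc : c = vB u := adj_C.mp h1
  subst hc
  have he4 : ee = vB v := adj_C.mp h4.symm
  subst he4
  have hd : d = vX := by
    rcases adj_B.mp h2 with h | h | h
    · subst h
      rcases adj_A.mp h3 with ⟨z, _, hz⟩ | h | h
      · simp at hz
      · simp at h; exact absurd h.symm huv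
      · simp at h
    · subst h
      have := adj_C.mp h3
      simp at this
      exact absurd this.symm huv
    · exact h
  subst hd
  rw [hedges]
  simpa using he

/-- canonical geodesic from u to v'' where u ~ v -/
def walkAC {u v : V} (huv : G.Adj u v) : (hatG G).Walk (vA u) (vC v) :=
  .cons (adj_A.mpr (Or.inl ⟨v, huv, rfl⟩)) (.cons (adj_A.mpr (Or.inr (Or.inl rfl)))
    (.cons (adj_B.mpr (Or.inr (Or.inl rfl))) .nil))

lemma dist_AC {u v : V} (huv : G.Adj u v) : (hatG G).dist (vA u) (vC v) = 3 := by
  refine (length_eq_dist_of_min (walkAC huv)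
    (fun p => three_le_length (by simp) (by simp [adj_A]) ?_ p)).symm
  intro c hac hcv
  have : c = vB v := adj_C.mp hcv.symm
  subst this
  rcases adj_A.mp hac with ⟨z, _, hz⟩ | h | h
  · simp at hz
  · simp at h; exact huv.ne h.symm
  · simp at h

lemma monitors_AC {u v : V} (huv : G.Adj u v) {e : Sym2 (V ⊕ V ⊕ V ⊕ Fin 3)}
    (he : e ∈ [s(vA u, vA v), s(vA v, vB v), s(vB v, vC v)]) :
    Monitors (hatG G) (vA u) (vC v) e := by
  intro p hp
  rw [dist_AC huv] at hp
  obtain ⟨c, d, h1, h2, h3, hedges⟩ := walk_length_three p hp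
  have hd : d = vB v := adj_C.mp h3.symm
  subst hd
  have hc : c = vA v := by
    rcases adj_B.mp h2.symm with h | h | h
    · exact h
    · subst h; exact absurd (adj_A.mp h1) (by simp)
    · subst h; exact absurd (adj_A.mp h1) (by simp)
  subst hc
  rw [hedges]
  simpa using he

end

section Pendant
variable {W : Type*} {H : SimpleGraph W}

lemma pendant_endpoint {z t : W} (hz : ∀ c, H.Adj z c → c = t)
    {a b : W} (p : H.Walk a b) (hp : p.IsPath) (he : s(t, z) ∈ p.edges) :
    z = a ∨ z = b := by
  induction p with
  | nil => simp at he
  | @cons a c b h q ih =>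
    rw [SimpleGraph.Walk.cons_isPath_iff] at hp
    rw [SimpleGraph.Walk.edges_cons, List.mem_cons] at he
    rcases he with he | he
    · rw [Sym2.eq_iff] at he
      rcases he with ⟨ht, hzc⟩ | ⟨ht, hza⟩
      · subst hzc
        cases q with
        | nil => exact Or.inr rfl
        | cons h' q' =>
          exfalso
          have hd : _ = t := hz _ h'
          subst hd
          subst ht
          exact hp.2 (by
            rw [SimpleGraph.Walk.support_cons, List.mem_cons]
            exact Or.inr q'.start_mem_support)
      · exact Or.inl hza
    · rcases ih hp.1 he with hzc | hzb
      · subst hzc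
        have hat : a = t := hz a h.symm
        subst hat
        exact absurd (SimpleGraph.Walk.fst_mem_support_of_mem_edges q he) hp.2
      · exact Or.inr hzb

lemma pendant_in_pair {z t a b : W} (hz : ∀ c, H.Adj z c → c = t)
    (hr : H.Reachable a b) (hm : Monitors H a b s(t, z)) : z = a ∨ z = b := by
  obtain ⟨p, hpath, hlen⟩ := hr.exists_path_of_dist
  exact pendant_endpoint hz p hpath (hm p hlen)

end Pendant

section
variable {G : SimpleGraph V}

lemma reach_Y [Nonempty V] (a : V ⊕ V ⊕ V ⊕ Fin 3) : (hatG G).Reachable a vY := by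
  have hA : ∀ w : V, (hatG G).Reachable (vA w) vY :=
    fun w => ((adj_A.mpr (Or.inr (Or.inr rfl))) : (hatG G).Adj (vA w) vY).reachable
  have hB : ∀ w : V, (hatG G).Reachable (vB w) vY :=
    fun w => (((adj_B.mpr (Or.inl rfl)) : (hatG G).Adj (vB w) (vA w)).reachable).trans (hA w)
  rcases a with w | w | w | j
  · exact hA w
  · exact hB w
  · exact (((adj_C.mpr rfl) : (hatG G).Adj (vC w) (vB w)).reachable).trans (hB w)
  · obtain ⟨w⟩ := ‹Nonempty V›
    fin_cases j
    · exact (((adj_X.mpr ⟨w, rfl⟩) : (hatG G).Adj vX (vB w)).reachable).trans (hB w)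
    · exact SimpleGraph.Reachable.refl _
    · exact ((adj_Z.mpr rfl) : (hatG G).Adj vZ vY).reachable

lemma hat_preconnected [Nonempty V] : (hatG G).Preconnected :=
  fun a b => (reach_Y a).trans (reach_Y b).symm

end

section
variable {G : SimpleGraph V}

/- handy adjacency constructors -/
lemma eAB (w : V) : (hatG G).Adj (vA w) (vB w) := adj_A.mpr (Or.inr (Or.inl rfl))
lemma eAY (w : V) : (hatG G).Adj (vA w) vY := adj_A.mpr (Or.inr (Or.inr rfl))
lemma eBC (w : V) : (hatG G).Adj (vB w) (vC w) := adj_B.mpr (Or.inr (Or.inl rfl))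
lemma eBX (w : V) : (hatG G).Adj (vB w) vX := adj_B.mpr (Or.inr (Or.inr rfl))
lemma eXB (w : V) : (hatG G).Adj vX (vB w) := adj_X.mpr ⟨w, rfl⟩
lemma eYA (w : V) : (hatG G).Adj vY (vA w) := adj_Y.mpr (Or.inl ⟨w, rfl⟩)
lemma eYZ : (hatG G).Adj (vY (V := V)) vZ := adj_Y.mpr (Or.inr rfl)
lemma eAA {w z : V} (h : G.Adj w z) : (hatG G).Adj (vA w) (vA z) :=
  adj_A.mpr (Or.inl ⟨z, h, rfl⟩)

section NotMon
variable {u v : V}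

/-- e is the G-edge we care about -/
local notation "E" => s(vA u, vA v)

lemma nm_AA {w z : V} (hwu : w ≠ u) (hwv : w ≠ v) (hzu : z ≠ u) (hzv : z ≠ v) :
    ¬ Monitors (hatG G) (vA w) (vA z) (E) := by
  by_cases hwz : w = z
  · subst hwz; exact not_monitors_self
  by_cases hadj : G.Adj w z
  · refine not_monitors_of_min (.cons (eAA hadj) .nil)
      (fun p => by exact one_le_length (by simp [hwz]) p) ?_
    simp [Sym2.eq_iff]
    tauto
  · refine not_monitors_of_min (.cons (eAY w) (.cons (eYA z) .nil))
      (fun p => by exact two_le_length (by simp [hwz]) (by simp [adj_A, hadj, hwz]) p) ?_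
    simp

lemma nm_AB {w z : V} (hwu : w ≠ u) (hwv : w ≠ v) (hzu : z ≠ u) (hzv : z ≠ v) :
    ¬ Monitors (hatG G) (vA w) (vB z) (E) := by
  by_cases hwz : w = z
  · subst hwz
    exact not_monitors_of_min (.cons (eAB w) .nil)
      (fun p => by exact one_le_length (by simp) p) (by simp)
  have hnadj : ¬ (hatG G).Adj (vA w) (vB z) := by
    simp only [adj_A]
    push_neg
    exact ⟨fun z' _ => by simp, by simp; exact fun h => hwz h.symm, by simp⟩
  by_cases hadj : G.Adj w z
  · refine not_monitors_of_min (.cons (eAA hadj) (.cons (eAB z) .nil))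
      (fun p => by exact two_le_length (by simp) hnadj p) ?_
    simp [Sym2.eq_iff]
    tauto
  · have hcom : ∀ c, (hatG G).Adj (vA w) c → (hatG G).Adj c (vB z) → False := by
      intro c h1 h2
      rcases adj_B.mp h2.symm with h | h | h <;> subst h
      · rcases adj_A.mp h1 with ⟨z', hz', h⟩ | h | h
        · simp at h; exact hadj (h ▸ hz')
        · simp at h
        · simp at h
      · exact absurd (adj_A.mp h1) (by simp)
      · exact absurd (adj_A.mp h1) (by simp)
    exact not_monitors_of_min (.cons (eAY w) (.cons (eYA z) (.cons (eAB z) .nil)))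
      (fun p => by exact three_le_length (by simp) hnadj hcom p) (by simp)

lemma nm_AC {w z : V} (hwu : w ≠ u) (hwv : w ≠ v) :
    ¬ Monitors (hatG G) (vA w) (vC z) (E) := by
  by_cases hwz : w = z
  · subst hwz
    exact not_monitors_of_min (.cons (eAB w) (.cons (eBC w) .nil))
      (fun p => by exact two_le_length (by simp) (by simp [adj_A]) p) (by simp)
  by_cases hadj : G.Adj w z
  · have hcom : ∀ c, (hatG G).Adj (vA w) c → (hatG G).Adj c (vC z) → False := by
      intro c h1 h2
      have := adj_C.mp h2.symm
      subst this
      rcases adj_A.mp h1 with ⟨z', hz', h⟩ | h | h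
      · simp at h
      · simp at h; exact hwz h.symm
      · simp at h
    refine not_monitors_of_min (.cons (eAA hadj) (.cons (eAB z) (.cons (eBC z) .nil)))
      (fun p => by exact three_le_length (by simp) (by simp [adj_A]) hcom p) ?_
    simp [Sym2.eq_iff]
    tauto
  · refine not_monitors_of_min
      (.cons (eAB w) (.cons (eBX w) (.cons (eXB z) (.cons (eBC z) .nil))))
      (fun p => ?_) (by simp)
    have h4 := four_le_from_C (w := z) (b := vA w) (by simp [hwz]) (by
        simp only [adj_A]
        push_neg
        refine ⟨fun z' hz' => by simp; rintro rfl; exact hadj hz'.symm, by simp, by simp⟩)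
      (by simp) (by simp) (by simp) (by simp [adj_X]) p.reverse
    simpa using h4

lemma nm_AX {w : V} : ¬ Monitors (hatG G) (vA w) (vX (V := V)) (E) :=
  not_monitors_of_min (.cons (eAB w) (.cons (eBX w) .nil))
    (fun p => by exact two_le_length (by simp) (by simp [adj_A]) p) (by simp)

lemma nm_AY {w : V} : ¬ Monitors (hatG G) (vA w) (vY (V := V)) (E) :=
  not_monitors_of_min (.cons (eAY w) .nil)
    (fun p => by exact one_le_length (by simp) p) (by simp)

lemma nm_AZ {w : V} : ¬ Monitors (hatG G) (vA w) (vZ (V := V)) (E) :=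
  not_monitors_of_min (.cons (eAY w) (.cons eYZ .nil))
    (fun p => by exact two_le_length (by simp) (by simp [adj_A]) p) (by simp)

lemma nm_BB {w z : V} : ¬ Monitors (hatG G) (vB w) (vB z) (E) := by
  by_cases hwz : w = z
  · subst hwz; exact not_monitors_self
  · exact not_monitors_of_min (.cons (eBX w) (.cons (eXB z) .nil))
      (fun p => by exact two_le_length (by simp [hwz]) (by simp [adj_B, hwz]) p) (by simp)

lemma nm_BC {w z : V} : ¬ Monitors (hatG G) (vB w) (vC z) (E) := by
  by_cases hwz : w = z
  · subst hwz
    exact not_monitors_of_min (.cons (eBC w) .nil)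
      (fun p => by exact one_le_length (by simp) p) (by simp)
  · have hcom : ∀ c, (hatG G).Adj (vB w) c → (hatG G).Adj c (vC z) → False := by
      intro c h1 h2
      have := adj_C.mp h2.symm
      subst this
      rcases adj_B.mp h1 with h | h | h <;> simp at h
    exact not_monitors_of_min (.cons (eBX w) (.cons (eXB z) (.cons (eBC z) .nil)))
      (fun p => by
        refine three_le_length (by simp [hwz]) ?_ hcom p
        simp only [adj_B]
        push_neg
        exact ⟨by simp, by simp; exact fun h => hwz h.symm, by simp⟩) (by simp)

lemma nm_BX {w : V} : ¬ Monitors (hatG G) (vB w) (vX (V := V)) (E) :=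
  not_monitors_of_min (.cons (eBX w) .nil)
    (fun p => by exact one_le_length (by simp) p) (by simp)

lemma nm_BY {w : V} : ¬ Monitors (hatG G) (vB w) (vY (V := V)) (E) :=
  not_monitors_of_min (.cons (eAB w).symm (.cons (eAY w) .nil))
    (fun p => by exact two_le_length (by simp) (by simp [adj_B]) p) (by simp)

lemma nm_BZ {w : V} : ¬ Monitors (hatG G) (vB w) (vZ (V := V)) (E) := by
  have hcom : ∀ c, (hatG G).Adj (vB w) c → (hatG G).Adj c (vZ (V := V)) → False := by
    intro c h1 h2
    have := adj_Z.mp h2.symm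
    subst this
    exact absurd (adj_B.mp h1) (by simp)
  exact not_monitors_of_min (.cons (eAB w).symm (.cons (eAY w) (.cons eYZ .nil)))
    (fun p => by exact three_le_length (by simp) (by simp [adj_B]) hcom p) (by simp)

lemma nm_CC {w z : V} : ¬ Monitors (hatG G) (vC w) (vC z) (E) := by
  by_cases hwz : w = z
  · subst hwz; exact not_monitors_self
  · refine not_monitors_of_min (walkCC w z) (fun p => by
      exact four_le_from_C (by simp) (by simp [adj_A]) (by simp [Ne.symm hwz]) (by simp)
        (by simp) (by simp [adj_X, Ne.symm hwz]) p) (by simp [walkCC])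

lemma nm_CX {w : V} : ¬ Monitors (hatG G) (vC w) (vX (V := V)) (E) :=
  not_monitors_of_min (.cons (adj_C.mpr rfl) (.cons (eBX w) .nil))
    (fun p => by exact two_le_length (by simp) (by simp [adj_C]) p) (by simp)

lemma nm_CY {w : V} : ¬ Monitors (hatG G) (vC w) (vY (V := V)) (E) := by
  have hcom : ∀ c, (hatG G).Adj (vC w) c → (hatG G).Adj c (vY (V := V)) → False := by
    intro c h1 h2
    have := adj_C.mp h1
    subst this
    exact absurd (adj_B.mp h2) (by simp)
  exact not_monitors_of_min
    (.cons (adj_C.mpr rfl) (.cons (eAB w).symm (.cons (eAY w) .nil)))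
    (fun p => by exact three_le_length (by simp) (by simp [adj_C]) hcom p) (by simp)

lemma nm_CZ {w : V} : ¬ Monitors (hatG G) (vC w) (vZ (V := V)) (E) := by
  refine not_monitors_of_min (walkCZ w) (fun p => by
    exact four_le_from_C (by simp) (by simp [adj_A]) (by simp) (by simp) (by simp)
      (by simp [adj_X]) p) (by simp [walkCZ])

lemma nm_CA {w z : V} (hzu : z ≠ u) (hzv : z ≠ v) :
    ¬ Monitors (hatG G) (vC w) (vA z) (E) := by
  by_cases hwz : w = z
  · subst hwz
    exact not_monitors_of_min (.cons (adj_C.mpr rfl) (.cons (eAB w).symm .nil))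
      (fun p => by exact two_le_length (by simp) (by simp [adj_C]) p) (by simp)
  by_cases hadj : G.Adj w z
  · have hcom : ∀ c, (hatG G).Adj (vC w) c → (hatG G).Adj c (vA z) → False := by
      intro c h1 h2
      have := adj_C.mp h1
      subst this
      rcases adj_B.mp h2 with h | h | h <;> simp at h
      exact hwz h.symm
    refine not_monitors_of_min
      (.cons (adj_C.mpr rfl) (.cons (eAB w).symm (.cons (eAA hadj) .nil)))
      (fun p => by exact three_le_length (by simp) (by simp [adj_C]) hcom p) ?_
    simp [Sym2.eq_iff]
    tauto
  · exact not_monitors_of_min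
      (.cons (adj_C.mpr rfl) (.cons (eBX w) (.cons (eXB z) (.cons (eAB z).symm .nil))))
      (fun p => by
        exact four_le_from_C (by simp [Ne.symm hwz]) (by
            simp only [adj_A]
            push_neg
            exact ⟨fun z' hz' => by simp; rintro rfl; exact hadj hz', by simp, by simp⟩)
          (by simp) (by simp) (by simp) (by simp [adj_X]) p) (by simp)

lemma nm_XY [Nonempty V] : ¬ Monitors (hatG G) (vX (V := V)) (vY (V := V)) (E) := by
  obtain ⟨w⟩ := ‹Nonempty V›
  have hcom : ∀ c, (hatG G).Adj (vX (V := V)) c → (hatG G).Adj c (vY (V := V)) → False := by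
    intro c h1 h2
    obtain ⟨z, hz⟩ := adj_X.mp h1
    subst hz
    exact absurd (adj_B.mp h2) (by simp)
  exact not_monitors_of_min (.cons (eXB w) (.cons (eAB w).symm (.cons (eAY w) .nil)))
    (fun p => by exact three_le_length (by simp) (by simp [adj_X]) hcom p) (by simp)

lemma nm_XZ [Nonempty V] : ¬ Monitors (hatG G) (vX (V := V)) (vZ (V := V)) (E) := by
  obtain ⟨w⟩ := ‹Nonempty V›
  exact not_monitors_of_min
    (.cons (eXB w) (.cons (eAB w).symm (.cons (eAY w) (.cons eYZ .nil))))
    (fun p => by exact four_le_X_Z p) (by simp)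

lemma nm_YZ : ¬ Monitors (hatG G) (vY (V := V)) (vZ (V := V)) (E) :=
  not_monitors_of_min (.cons eYZ .nil)
    (fun p => by exact one_le_length (by simp) p) (by simp)

end NotMon
end

section
variable {G : SimpleGraph V}

lemma monitor_pair_mem [Nonempty V] {u v : V} {a b : V ⊕ V ⊕ V ⊕ Fin 3}
    (hm : Monitors (hatG G) a b s(vA u, vA v)) :
    (a = vA u ∨ a = vA v ∨ a = vB u ∨ a = vB v) ∨
      (b = vA u ∨ b = vA v ∨ b = vB u ∨ b = vB v) := by
  by_contra hcon
  push_neg at hcon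
  obtain ⟨⟨ha1, ha2, ha3, ha4⟩, hb1, hb2, hb3, hb4⟩ := hcon
  rcases a with w | w | w | j <;> rcases b with z | z | z | j'
  · exact nm_AA (by simpa using ha1) (by simpa using ha2)
      (by simpa using hb1) (by simpa using hb2) hm
  · exact nm_AB (by simpa using ha1) (by simpa using ha2)
      (by simpa using hb3) (by simpa using hb4) hm
  · exact nm_AC (by simpa using ha1) (by simpa using ha2) hm
  · fin_cases j'
    · exact nm_AX hm
    · exact nm_AY hm
    · exact nm_AZ hm
  · exact nm_AB (by simpa using hb1) (by simpa using hb2)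
      (by simpa using ha3) (by simpa using ha4) (monitors_symm hm)
  · exact nm_BB hm
  · exact nm_BC hm
  · fin_cases j'
    · exact nm_BX hm
    · exact nm_BY hm
    · exact nm_BZ hm
  · exact nm_CA (by simpa using hb1) (by simpa using hb2) hm
  · exact nm_BC (monitors_symm hm)
  · exact nm_CC hm
  · fin_cases j'
    · exact nm_CX hm
    · exact nm_CY hm
    · exact nm_CZ hm
  · fin_cases j
    · exact nm_AX (monitors_symm hm)
    · exact nm_AY (monitors_symm hm)
    · exact nm_AZ (monitors_symm hm)
  · fin_cases j
    · exact nm_BX (monitors_symm hm)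
    · exact nm_BY (monitors_symm hm)
    · exact nm_BZ (monitors_symm hm)
  · fin_cases j
    · exact nm_CX (monitors_symm hm)
    · exact nm_CY (monitors_symm hm)
    · exact nm_CZ (monitors_symm hm)
  · fin_cases j <;> fin_cases j'
    · exact not_monitors_self hm
    · exact nm_XY hm
    · exact nm_XZ hm
    · exact nm_XY (monitors_symm hm)
    · exact not_monitors_self hm
    · exact nm_YZ hm
    · exact nm_XZ (monitors_symm hm)
    · exact nm_YZ (monitors_symm hm)
    · exact not_monitors_self hm

end

end Hat

open Hat

/-- `G` has a vertex cover of size at most `k` iff `Ĝ` has an MEG-set of size at most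
`k + n + 1`, where `n = |V(G)|`. -/
theorem stmt12 {V : Type*} [Fintype V] [DecidableEq V] (G : SimpleGraph V)
    (hcard : 2 ≤ Fintype.card V) (k : ℕ) :
    (∃ C : Finset V, C.card ≤ k ∧ ∀ a b, G.Adj a b → a ∈ C ∨ b ∈ C) ↔
      (∃ M : Finset (V ⊕ V ⊕ V ⊕ Fin 3), M.card ≤ k + Fintype.card V + 1 ∧
        MEGSet (hatG G) ↑M) := by
  classical
  have hVne : Nonempty V := Fintype.card_pos_iff.mp (by omega)
  constructor
  · rintro ⟨C, hCk, hcov⟩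
    refine ⟨C.image vA ∪ Finset.univ.image vC ∪ {vZ}, ?_, ?_⟩
    · calc (C.image vA ∪ Finset.univ.image vC ∪ {vZ}).card
          ≤ (C.image vA ∪ Finset.univ.image vC).card + 1 := by
            simpa using Finset.card_union_le (C.image vA ∪ Finset.univ.image vC) {vZ}
        _ ≤ (C.image vA).card + (Finset.univ.image vC).card + 1 := by
            have := Finset.card_union_le (C.image vA) (Finset.univ.image vC)
            omega
        _ ≤ k + Fintype.card V + 1 := by
            have h1 : (C.image vA).card ≤ k := le_trans (Finset.card_image_le) hCk
            have h2 : (Finset.univ.image (vC (V := V))).card ≤ Fintype.card V :=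
              le_trans (Finset.card_image_le) (by simp)
            omega
    · intro e he
      have hCmem : ∀ w : V, (vC w : V ⊕ V ⊕ V ⊕ Fin 3) ∈
          (↑(C.image vA ∪ Finset.univ.image vC ∪ {vZ}) : Set _) := by
        intro w; simp
      have hZmem : (vZ : V ⊕ V ⊕ V ⊕ Fin 3) ∈
          (↑(C.image vA ∪ Finset.univ.image vC ∪ {vZ}) : Set _) := by simp
      have hAmem : ∀ w ∈ C, (vA w : V ⊕ V ⊕ V ⊕ Fin 3) ∈
          (↑(C.image vA ∪ Finset.univ.image vC ∪ {vZ}) : Set _) := by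
        intro w hw; simp; tauto
      induction e using Sym2.ind with
      | _ a b =>
        rw [SimpleGraph.mem_edgeSet] at he
        obtain ⟨w₀⟩ := hVne
        rcases a with w | w | w | j
        · rcases adj_A.mp he with ⟨z, hz, rfl⟩ | rfl | rfl
          · rcases hcov w z hz with hw | hz'
            · exact ⟨vA w, hAmem w hw, vC z, hCmem z,
                monitors_AC hz (by simp)⟩
            · exact ⟨vA z, hAmem z hz', vC w, hCmem w,
                monitors_AC hz.symm (by simp [Sym2.eq_iff])⟩
          · exact ⟨vC w, hCmem w, vZ, hZmem, monitors_CZ (by simp [Sym2.eq_iff])⟩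
          · exact ⟨vC w, hCmem w, vZ, hZmem, monitors_CZ (by simp)⟩
        · rcases adj_B.mp he with rfl | rfl | rfl
          · exact ⟨vC w, hCmem w, vZ, hZmem, monitors_CZ (by simp)⟩
          · exact ⟨vC w, hCmem w, vZ, hZmem, monitors_CZ (by simp [Sym2.eq_iff])⟩
          · obtain ⟨w₂, hw₂⟩ := Fintype.exists_ne_of_one_lt_card (by omega) w
            exact ⟨vC w, hCmem w, vC w₂, hCmem w₂, monitors_CC (Ne.symm hw₂) (by simp)⟩
        · have := adj_C.mp he
          subst this
          exact ⟨vC w, hCmem w, vZ, hZmem, monitors_CZ (by simp [Sym2.eq_iff])⟩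
        · fin_cases j
          · obtain ⟨z, rfl⟩ := adj_X.mp he
            obtain ⟨w₂, hw₂⟩ := Fintype.exists_ne_of_one_lt_card (by omega) z
            exact ⟨vC w₂, hCmem w₂, vC z, hCmem z, monitors_CC hw₂ (by simp)⟩
          · rcases adj_Y.mp he with ⟨z, rfl⟩ | rfl
            · exact ⟨vC z, hCmem z, vZ, hZmem, monitors_CZ (by simp [Sym2.eq_iff])⟩
            · exact ⟨vC w₀, hCmem w₀, vZ, hZmem, monitors_CZ (by simp)⟩
          · have := adj_Z.mp he
            subst this
            exact ⟨vC w₀, hCmem w₀, vZ, hZmem, monitors_CZ (by simp [Sym2.eq_iff])⟩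
  · rintro ⟨M, hMk, hMEG⟩
    -- all pendant vertices are in M
    have hCin : ∀ w : V, vC w ∈ M := by
      intro w
      obtain ⟨a, ha, b, hb, hmon⟩ := hMEG s(vB w, vC w) (((hatG G).mem_edgeSet).mpr (eBC w))
      rcases pendant_in_pair (fun c h => adj_C.mp h) (hat_preconnected a b) hmon with h | h
      · exact h ▸ ha
      · exact h ▸ hb
    have hZin : (vZ : V ⊕ V ⊕ V ⊕ Fin 3) ∈ M := by
      obtain ⟨a, ha, b, hb, hmon⟩ := hMEG s(vY, vZ) (((hatG G).mem_edgeSet).mpr eYZ)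
      rcases pendant_in_pair (fun c h => adj_Z.mp h) (hat_preconnected a b) hmon with h | h
      · exact h ▸ ha
      · exact h ▸ hb
    set P : Finset (V ⊕ V ⊕ V ⊕ Fin 3) := Finset.univ.image vC ∪ {vZ} with hP
    have hPM : P ⊆ M := by
      intro c hc
      rw [hP, Finset.mem_union] at hc
      rcases hc with hc | hc
      · obtain ⟨w, _, rfl⟩ := Finset.mem_image.mp hc
        exact hCin w
      · rw [Finset.mem_singleton] at hc
        exact hc ▸ hZin
    have hPcard : P.card = Fintype.card V + 1 := by
      have hinjC : Function.Injective (vC (V := V)) := fun a b h => by simpa using h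
      rw [hP, Finset.card_union_of_disjoint (by simp),
        Finset.card_image_of_injective _ hinjC, Finset.card_univ, Finset.card_singleton]
    refine ⟨Finset.univ.filter (fun w => vA w ∈ M ∨ vB w ∈ M), ?_, ?_⟩
    · -- cardinality
      set Cov := Finset.univ.filter (fun w => vA w ∈ M ∨ vB w ∈ M) with hCov
      have hinj : ∀ w ∈ Cov, ∀ z ∈ Cov,
          (fun w => if vA w ∈ M then (vA w : V ⊕ V ⊕ V ⊕ Fin 3) else vB w) w =
          (fun w => if vA w ∈ M then (vA w : V ⊕ V ⊕ V ⊕ Fin 3) else vB w) z → w = z := by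
        intro w _ z _ h
        simp only at h
        split_ifs at h <;> simpa using h
      have hmaps : ∀ w ∈ Cov,
          (if vA w ∈ M then (vA w : V ⊕ V ⊕ V ⊕ Fin 3) else vB w) ∈ M \ P := by
        intro w hw
        rw [hCov, Finset.mem_filter] at hw
        rw [Finset.mem_sdiff]
        constructor
        · split_ifs with h
          · exact h
          · tauto
        · split_ifs <;> simp [hP]
      have hle : Cov.card ≤ (M \ P).card := Finset.card_le_card_of_injOn _ hmaps hinj
      have hsd : (M \ P).card = M.card - P.card := Finset.card_sdiff_of_subset hPM
      have := Finset.card_le_card hPM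
      omega
    · -- cover property
      intro aa bb hab
      obtain ⟨a, ha, b, hb, hmon⟩ :=
        hMEG s(vA aa, vA bb) (((hatG G).mem_edgeSet).mpr (eAA hab))
      have hdisp := monitor_pair_mem hmon
      simp only [Finset.mem_filter, Finset.mem_univ, true_and]
      rcases hdisp with (rfl | rfl | rfl | rfl) | (rfl | rfl | rfl | rfl)
      · exact Or.inl (Or.inl ha)
      · exact Or.inr (Or.inl ha)
      · exact Or.inl (Or.inr ha)
      · exact Or.inr (Or.inr ha)
      · exact Or.inl (Or.inl hb)
      · exact Or.inr (Or.inl hb)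
      · exact Or.inl (Or.inr hb)
      · exact Or.inr (Or.inr hb)
end

section
/- If G is a 2-degenerate graph, then the graph Ĝ obtained by the reduction is 3-degenerate. -/
open SimpleGraph

/-- `G` is `k`-degenerate: every nonempty (induced) subgraph has a vertex of degree
at most `k`. -/
def Degenerate {V : Type*} (G : SimpleGraph V) (k : ℕ) : Prop :=
  ∀ s : Set V, s.Nonempty → ∃ a ∈ s, (G.neighborSet a ∩ s).ncard ≤ k

/-- If `G` is 2-degenerate, then `Ĝ` is 3-degenerate. -/
theorem stmt13 {V : Type*} [Fintype V] (G : SimpleGraph V)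
    (hdeg : Degenerate G 2) : Degenerate (hatG G) 3 := by
  classical
  intro s hs
  -- Case 1: some u'' is in s
  by_cases h1 : ∃ u, Sum.inr (Sum.inr (Sum.inl u)) ∈ s
  · obtain ⟨u, hu⟩ := h1
    refine ⟨_, hu, ?_⟩
    have hsub : (hatG G).neighborSet (Sum.inr (Sum.inr (Sum.inl u))) ∩ s ⊆
        {Sum.inr (Sum.inl u)} := by
      rintro w ⟨hw, -⟩
      simp only [mem_neighborSet, hatG, fromRel_adj] at hw
      obtain ⟨-, h | h⟩ := hw <;> rcases w with a | a | a | j <;>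
        simp [hatRel] at h ⊢ <;> tauto
    exact le_trans (Set.ncard_le_ncard hsub (Set.finite_singleton _)) (by simp)
  -- Case 2: y* is in s
  by_cases h2 : Sum.inr (Sum.inr (Sum.inr 2)) ∈ s
  · refine ⟨_, h2, ?_⟩
    have hsub : (hatG G).neighborSet (Sum.inr (Sum.inr (Sum.inr 2))) ∩ s ⊆
        {Sum.inr (Sum.inr (Sum.inr 1))} := by
      rintro w ⟨hw, -⟩
      simp only [mem_neighborSet, hatG, fromRel_adj] at hw
      obtain ⟨-, h | h⟩ := hw <;> rcases w with a | a | a | j <;>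
        simp [hatRel] at h ⊢ <;> omega
    exact le_trans (Set.ncard_le_ncard hsub (Set.finite_singleton _)) (by simp)
  -- Case 3: some u' is in s
  by_cases h3 : ∃ u, Sum.inr (Sum.inl u) ∈ s
  · obtain ⟨u, hu⟩ := h3
    refine ⟨_, hu, ?_⟩
    have hsub : (hatG G).neighborSet (Sum.inr (Sum.inl u)) ∩ s ⊆
        {Sum.inl u, Sum.inr (Sum.inr (Sum.inl u)), Sum.inr (Sum.inr (Sum.inr 0))} := by
      rintro w ⟨hw, -⟩
      simp only [mem_neighborSet, hatG, fromRel_adj] at hw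
      obtain ⟨-, h | h⟩ := hw <;> rcases w with a | a | a | j <;>
        simp [hatRel] at h ⊢ <;> tauto
    refine le_trans (Set.ncard_le_ncard hsub (Set.toFinite _)) ?_
    refine le_trans (Set.ncard_insert_le _ _) ?_
    have := Set.ncard_insert_le (Sum.inr (Sum.inr (Sum.inl u)) : V ⊕ V ⊕ V ⊕ Fin 3)
      ({Sum.inr (Sum.inr (Sum.inr 0))} : Set (V ⊕ V ⊕ V ⊕ Fin 3))
    simp only [Set.ncard_singleton] at this
    omega
  -- Case 4: some original vertex u is in s
  by_cases h4 : ∃ u, Sum.inl u ∈ s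
  · set s₀ : Set V := {v | Sum.inl v ∈ s} with hs₀
    obtain ⟨u, hu⟩ := h4
    obtain ⟨a, ha, hcard⟩ := hdeg s₀ ⟨u, hu⟩
    refine ⟨Sum.inl a, ha, ?_⟩
    have hsub : (hatG G).neighborSet (Sum.inl a) ∩ s ⊆
        Sum.inl '' (G.neighborSet a ∩ s₀) ∪ {Sum.inr (Sum.inr (Sum.inr 1))} := by
      rintro w ⟨hw, hws⟩
      simp only [mem_neighborSet, hatG, fromRel_adj] at hw
      obtain ⟨-, h | h⟩ := hw <;> rcases w with b | b | b | j <;>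
        simp [hatRel] at h
      · exact Or.inl ⟨b, ⟨h, hws⟩, rfl⟩
      · exact absurd (h ▸ hws) (fun hh => h3 ⟨a, hh⟩)
      · simp [h]
      · exact Or.inl ⟨b, ⟨h.symm, hws⟩, rfl⟩
    refine le_trans (Set.ncard_le_ncard hsub (Set.toFinite _)) ?_
    refine le_trans (Set.ncard_union_le _ _) ?_
    rw [Set.ncard_image_of_injective _ Sum.inl_injective]
    simp
    omega
  -- Case 5: s ⊆ {x, y}
  obtain ⟨w, hw⟩ := hs
  refine ⟨w, hw, ?_⟩
  have hsub : (hatG G).neighborSet w ∩ s ⊆ (∅ : Set _) := by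
    rintro z ⟨hz, hzs⟩
    -- z is in s, so z is x or y (all other forms excluded); similarly w.
    have hforms : ∀ v ∈ s, v = Sum.inr (Sum.inr (Sum.inr 0)) ∨ v = Sum.inr (Sum.inr (Sum.inr 1)) := by
      rintro (b | b | b | j) hv
      · exact absurd ⟨b, hv⟩ h4
      · exact absurd ⟨b, hv⟩ h3
      · exact absurd ⟨b, hv⟩ h1
      · fin_cases j
        · exact Or.inl rfl
        · exact Or.inr rfl
        · exact absurd hv h2
    have hwf := hforms w hw
    have hzf := hforms z hzs
    simp only [mem_neighborSet, hatG, fromRel_adj] at hz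
    obtain ⟨hne, h | h⟩ := hz <;>
      rcases hwf with rfl | rfl <;> rcases hzf with rfl | rfl <;>
      simp [hatRel] at h hne <;> omega
  simpa using le_trans (Set.ncard_le_ncard hsub (Set.toFinite _)) (by simp)
end
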